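/- arXiv:0912.2979 — 10 statements merged into one kernel-verified Lean document; each statement's English description precedes it below -/
import Mathlib

section
/- For any set system R on ground set [n] and any integers b > i ≥ 0, if the shatter function satisfies f_R(b) < 2^i·(b-i+1), then |R| < ∑_{j=0}^{i} (b-j+1)·C(n,j). In particular |R| = O(n^i). -/
/-!
Induct on the ground set `U`. Deleting a point `x` splits `R` into its projection
`{A \ {x} : A ∈ R}` on `U \ {x}` and the doubled family `{S : S ∈ R, S ∪ {x} ∈ R, x ∉ S}`,
whose sizes add up to `|R|`. The projection has the same traces as `R` on sets avoiding `x`,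
and every trace of the doubled family on `X` occurs twice in the trace of `R` on `X ∪ {x}`,
so the two families satisfy the hypothesis for `(b, i)` and `(b - 1, i - 1)` respectively;
Pascal's rule adds the two bounds up. For `i = 0` we use Bondy's theorem instead: `m` distinct
sets are already distinct on some `m - 1` points, so `|R| ≥ b + 1` would give a trace of
size `b + 1` on some `b` points.
-/

open Finset

def sauerBound (n b i : ℕ) : ℕ := ∑ j ∈ range (i + 1), (b - j + 1) * n.choose j

lemma sauerBound_zero_right (n b : ℕ) : sauerBound n b 0 = b + 1 := by
  simp [sauerBound]

lemma pow_mul_le_sauerBound {n b i : ℕ} (hin : i ≤ n) :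
    2 ^ i * (b - i + 1) ≤ sauerBound n b i := by
  rw [sauerBound, ← Nat.sum_range_choose, sum_mul]
  refine sum_le_sum fun j hj => ?_
  rw [mul_comm]
  exact Nat.mul_le_mul (by simp at hj; omega) (Nat.choose_le_choose j hin)

lemma sauerBound_succ_succ (n b i : ℕ) :
    sauerBound (n + 1) b (i + 1) = sauerBound n b (i + 1) + sauerBound n (b - 1) i := by
  simp only [sauerBound]
  rw [sum_range_succ', sum_range_succ' (fun j => (b - j + 1) * n.choose j)]
  simp only [Nat.choose_succ_succ, Nat.choose_zero_right, mul_add, sum_add_distrib,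
    Nat.sub_add_eq, Nat.sub_right_comm b 1]
  ring

namespace Finset

variable {α : Type*} [DecidableEq α] {𝒜 : Finset (Finset α)} {X U : Finset α} {x : α}

def trace (𝒜 : Finset (Finset α)) (X : Finset α) : Finset (Finset α) := 𝒜.image (· ∩ X)

lemma trace_eq_self (h𝒜 : ∀ A ∈ 𝒜, A ⊆ U) : 𝒜.trace U = 𝒜 := by
  rw [trace, image_congr fun A hA => inter_eq_left.mpr (h𝒜 A hA), image_id']

lemma trace_image_erase (hx : x ∉ X) : (𝒜.image (erase · x)).trace X = 𝒜.trace X := by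
  rw [trace, trace, image_image]
  refine image_congr fun A _ => ?_
  simp [Function.comp, erase_inter, erase_eq_of_notMem (fun h => hx (mem_inter.mp h).2)]

lemma trace_memberSubfamily_subset (hx : x ∉ X) :
    (𝒜.memberSubfamily x).trace X ⊆ (𝒜.trace (insert x X)).memberSubfamily x := by
  simp only [subset_iff, trace, mem_image, mem_memberSubfamily]
  rintro _ ⟨A, ⟨hA, -⟩, rfl⟩
  exact ⟨⟨insert x A, hA, (insert_inter_distrib ..).symm⟩, fun h => hx (mem_inter.mp h).2⟩

lemma trace_nonMemberSubfamily_subset (hx : x ∉ X) :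
    (𝒜.nonMemberSubfamily x).trace X ⊆ (𝒜.trace (insert x X)).nonMemberSubfamily x := by
  simp only [subset_iff, trace, mem_image, mem_nonMemberSubfamily]
  rintro _ ⟨A, ⟨hA, hxA⟩, rfl⟩
  exact ⟨⟨A, hA, by simp [inter_insert_of_notMem hxA]⟩, fun h => hx (mem_inter.mp h).2⟩

lemma card_eq_card_image_erase_add_card_inter (𝒜 : Finset (Finset α)) (x : α) :
    #𝒜 = #(𝒜.image (erase · x)) + #(𝒜.memberSubfamily x ∩ 𝒜.nonMemberSubfamily x) := by
  rw [← memberSubfamily_union_nonMemberSubfamily, card_union_add_card_inter,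
    card_memberSubfamily_add_card_nonMemberSubfamily]

lemma two_mul_card_memberSubfamily_inter_nonMemberSubfamily_le (𝒜 : Finset (Finset α)) (x : α) :
    2 * #(𝒜.memberSubfamily x ∩ 𝒜.nonMemberSubfamily x) ≤ #𝒜 := by
  rw [card_eq_card_image_erase_add_card_inter 𝒜 x, ← memberSubfamily_union_nonMemberSubfamily,
    two_mul]
  exact Nat.add_le_add_right (card_le_card inter_subset_union) _

lemma two_mul_card_trace_le (hx : x ∉ X) :
    2 * #((𝒜.memberSubfamily x ∩ 𝒜.nonMemberSubfamily x).trace X) ≤ #(𝒜.trace (insert x X)) :=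
  calc 2 * #((𝒜.memberSubfamily x ∩ 𝒜.nonMemberSubfamily x).trace X)
      ≤ 2 * #((𝒜.trace (insert x X)).memberSubfamily x ∩
          (𝒜.trace (insert x X)).nonMemberSubfamily x) := by
        gcongr
        exact image_inter_subset _ _ _ |>.trans <|
          inter_subset_inter (trace_memberSubfamily_subset hx) (trace_nonMemberSubfamily_subset hx)
    _ ≤ #(𝒜.trace (insert x X)) := two_mul_card_memberSubfamily_inter_nonMemberSubfamily_le _ _

lemma inter_eq_inter_of_inter_subset {A B Y : Finset α} (hA : A ∩ X ⊆ Y) (hB : B ∩ X ⊆ Y)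
    (h : A ∩ Y = B ∩ Y) : A ∩ X = B ∩ X := by
  rw [← inter_eq_left.mpr hA, ← inter_eq_left.mpr hB, inter_right_comm, h, inter_right_comm]

lemma injOn_inter_of_inter_subset {𝒮 : Set (Finset α)} {Y : Finset α}
    (h : Set.InjOn (· ∩ X) 𝒮) (hXY : ∀ A ∈ 𝒮, A ∩ X ⊆ Y) : Set.InjOn (· ∩ Y) 𝒮 :=
  fun A hA B hB hAB => h hA hB (inter_eq_inter_of_inter_subset (hXY A hA) (hXY B hB) hAB)

theorem exists_card_le_injOn_inter (𝒮 : Finset (Finset α)) :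
    ∃ X : Finset α, #X ≤ #𝒮 - 1 ∧ Set.InjOn (· ∩ X) (𝒮 : Set (Finset α)) := by
  induction 𝒮 using Finset.induction_on with
  | empty => exact ⟨∅, by simp, by simp⟩
  | insert A 𝒮 hA ih =>
    obtain ⟨X, hXcard, hXinj⟩ := ih
    rw [coe_insert, card_insert_of_notMem hA]
    by_cases hclash : ∃ B ∈ 𝒮, B ∩ X = A ∩ X
    · -- `B` is the only member of `𝒮` clashing with `A`, so one point of `A ∆ B` suffices.
      obtain ⟨B, hB, hBA⟩ := hclash
      obtain ⟨x, hx⟩ := symmDiff_nonempty.mpr (ne_of_mem_of_not_mem hB hA).symm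
      have hXx : ∀ C : Finset α, C ∩ X ⊆ insert x X :=
        fun C => inter_subset_right.trans (subset_insert x X)
      refine ⟨insert x X, ?_, (Set.injOn_insert hA).mpr ⟨injOn_inter_of_inter_subset hXinj
        fun C _ => hXx C, ?_⟩⟩
      · have := card_insert_le x X
        have := card_pos.mpr ⟨B, hB⟩
        omega
      · rintro ⟨C, hC, hCA⟩
        have hCB : C = B := hXinj hC hB
          ((inter_eq_inter_of_inter_subset (hXx C) (hXx A) hCA).trans hBA.symm)
        subst hCB
        have := congrArg (x ∈ ·) hCA
        simp only [mem_inter, mem_insert_self, and_true] at this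
        rw [mem_symmDiff] at hx
        tauto
    · refine ⟨X, by omega, (Set.injOn_insert hA).mpr ⟨hXinj, ?_⟩⟩
      rintro ⟨B, hB, hBA⟩
      exact hclash ⟨B, hB, hBA⟩

theorem card_le_of_forall_card_trace_le {b : ℕ} (h𝒜 : ∀ A ∈ 𝒜, A ⊆ U) (hbU : b ≤ #U)
    (htr : ∀ X ⊆ U, #X = b → #(𝒜.trace X) ≤ b) : #𝒜 ≤ b := by
  by_contra! hcard
  obtain ⟨𝒮, h𝒮𝒜, h𝒮card⟩ := exists_subset_card_eq (Nat.succ_le_of_lt hcard)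
  obtain ⟨X, hXcard, hXinj⟩ := exists_card_le_injOn_inter 𝒮
  obtain ⟨Y, hXY, hYU, hYcard⟩ := exists_subsuperset_card_eq (inter_subset_right : X ∩ U ⊆ U)
    ((card_le_card inter_subset_left).trans (by omega)) hbU
  have hYinj : Set.InjOn (· ∩ Y) (𝒮 : Set (Finset α)) :=
    injOn_inter_of_inter_subset hXinj fun A hA =>
      (subset_inter inter_subset_right (inter_subset_left.trans (h𝒜 A (h𝒮𝒜 hA)))).trans hXY
  have h𝒮trace : #(𝒮.trace Y) = b + 1 := by rw [trace, card_image_of_injOn hYinj, h𝒮card]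
  have h𝒮𝒜trace : #(𝒮.trace Y) ≤ #(𝒜.trace Y) := card_le_card (image_subset_image h𝒮𝒜)
  have := htr Y hYU hYcard
  omega

theorem card_lt_sauerBound {b i : ℕ} (hib : i < b) (hbU : b ≤ #U) (h𝒜 : ∀ A ∈ 𝒜, A ⊆ U)
    (htr : ∀ X ⊆ U, #X = b → #(𝒜.trace X) < 2 ^ i * (b - i + 1)) :
    #𝒜 < sauerBound #U b i := by
  induction U using Finset.induction_on generalizing 𝒜 b i with
  | empty => simp at hbU; omega
  | insert x U hxU ih =>
    obtain _ | i := i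
    · rw [sauerBound_zero_right]
      exact Nat.lt_succ_of_le <| card_le_of_forall_card_trace_le h𝒜 hbU
        fun X hXU hX => Nat.le_of_lt_succ (by simpa using htr X hXU hX)
    obtain hb | hb := hbU.eq_or_lt
    · calc #𝒜 = #(𝒜.trace (insert x U)) := by rw [trace_eq_self h𝒜]
        _ < 2 ^ (i + 1) * (b - (i + 1) + 1) := htr _ Subset.rfl hb.symm
        _ ≤ sauerBound b b (i + 1) := pow_mul_le_sauerBound hib.le
        _ = _ := by rw [hb]
    rw [card_insert_of_notMem hxU] at hb ⊢
    have hxX : ∀ X ⊆ U, x ∉ X := fun X hX h => hxU (hX h)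
    have hproj : #(𝒜.image (erase · x)) < sauerBound #U b (i + 1) := by
      refine ih hib (by omega) ?_ fun X hXU hX => ?_
      · simp only [mem_image]
        rintro _ ⟨A, hA, rfl⟩
        exact subset_insert_iff.mp (h𝒜 A hA)
      · rw [trace_image_erase (hxX X hXU)]
        exact htr X (hXU.trans (subset_insert x U)) hX
    have hdouble :
        #(𝒜.memberSubfamily x ∩ 𝒜.nonMemberSubfamily x) < sauerBound #U (b - 1) i := by
      refine ih (by omega) (by omega) ?_ fun X hXU hX => ?_
      · intro A hA
        rw [mem_inter, mem_memberSubfamily] at hA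
        exact (insert_subset_insert_iff hA.1.2).mp (h𝒜 _ hA.1.1)
      · have hdoubled := two_mul_card_trace_le (𝒜 := 𝒜) (hxX X hXU)
        have hins := htr (insert x X) (insert_subset_insert x hXU)
          (by rw [card_insert_of_notMem (hxX X hXU)]; omega)
        rw [pow_succ, show b - (i + 1) = b - 1 - i by omega, mul_comm _ 2, mul_assoc] at hins
        omega
    rw [card_eq_card_image_erase_add_card_inter 𝒜 x, sauerBound_succ_succ]
    omega

end Finset

/-- Generalized Sauer lemma: if the shatter function of a set system `R` on `[n]`
satisfies `f_R(b) < 2^i (b-i+1)` for some `b > i ≥ 0`, then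
`|R| < ∑_{j=0}^{i} (b-j+1) C(n,j)`. -/
theorem stmt0 (n b i : ℕ) (hib : i < b) (hbn : b ≤ n)
    (R : Finset (Finset (Fin n)))
    (h : ∀ X : Finset (Fin n), X.card = b →
      (R.image (fun A => A ∩ X)).card < 2 ^ i * (b - i + 1)) :
    R.card < ∑ j ∈ Finset.range (i + 1), (b - j + 1) * n.choose j := by
  have := card_lt_sauerBound (U := univ) hib (by rwa [card_fin]) (fun A _ => subset_univ A)
    fun X _ hX => h X hX
  rwa [card_fin] at this
end

section
/- For every integer b ≥ 1 and every integer i with 0 ≤ i ≤ b, the inequality ∑_{j=0}^{i} (b-j+1)·C(b,j) ≥ 2^i·(b-i+1) holds. -/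
open Finset

theorem two_pow_le_sum_range_choose {i b : ℕ} (hi : i ≤ b) :
    2 ^ i ≤ ∑ j ∈ range (i + 1), b.choose j :=
  calc 2 ^ i = ∑ j ∈ range (i + 1), i.choose j := (Nat.sum_range_choose i).symm
    _ ≤ ∑ j ∈ range (i + 1), b.choose j := sum_le_sum fun j _ => Nat.choose_le_choose j hi

theorem stmt1_general (b i : ℕ) (hi : i ≤ b) :
    2 ^ i * (b - i + 1) ≤ ∑ j ∈ Finset.range (i + 1), (b - j + 1) * Nat.choose b j := by
  calc 2 ^ i * (b - i + 1)
      ≤ (∑ j ∈ range (i + 1), b.choose j) * (b - i + 1) :=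
        Nat.mul_le_mul_right _ (two_pow_le_sum_range_choose hi)
    _ = ∑ j ∈ range (i + 1), (b - i + 1) * b.choose j := by
        rw [sum_mul]; simp_rw [mul_comm]
    _ ≤ ∑ j ∈ range (i + 1), (b - j + 1) * b.choose j := by
        refine sum_le_sum fun j hj => Nat.mul_le_mul_right _ ?_
        have hji : j ≤ i := Nat.lt_succ_iff.mp (mem_range.mp hj)
        omega

/-- Base case `n = b`: the bound `∑_{j=0}^{i}(b-j+1)C(b,j)` dominates `2^i (b-i+1)`. -/
theorem stmt1 (b i : ℕ) (hb : 1 ≤ b) (hi : i ≤ b) :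
    2 ^ i * (b - i + 1) ≤ ∑ j ∈ Finset.range (i + 1), (b - j + 1) * Nat.choose b j :=
  stmt1_general b i hi
end

section
/- Let R be a family of subsets of [n], R' = R|_{[n-1]}, and D ⊆ R' the set of traces arising from two distinct members of R. Then for every b ≥ 1, f_D(b-1) ≤ ⌊f_R(b)/2⌋. -/
/-!
Put `m = n - 1` and `X = Y ∪ {m}`. A trace `A ∈ D` comes from two distinct sets of `R` that agree
below `m`, so they differ exactly at `m`: one of them traces `A ∩ Y` on `X`, the other
`(A ∩ Y) ∪ {m}`. Hence every trace `T` of `D` on `Y` yields two traces `T` and `T ∪ {m}` of `R` on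
`X`; as `m ∉ T`, all these traces are distinct, so `2 f_D(b - 1) ≤ f_R(b)`.
-/

open Finset

namespace Finset

variable {α : Type*} [DecidableEq α]

theorem eq_of_inter_eq_of_mem_iff {B C s : Finset α} {a : α} (hB : B ⊆ insert a s)
    (hC : C ⊆ insert a s) (h : B ∩ s = C ∩ s) (ha : a ∈ B ↔ a ∈ C) : B = C := by
  ext x
  by_cases hx : x = a
  · exact hx ▸ ha
  · have key : ∀ E ⊆ insert a s, x ∈ E ↔ x ∈ E ∩ s := fun E hE =>
      ⟨fun hxE => mem_inter.2 ⟨hxE, (mem_insert.1 (hE hxE)).resolve_left hx⟩,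
        fun hxE => (mem_inter.1 hxE).1⟩
    rw [key B hB, key C hC, h]

theorem inter_eq_inter_of_inter_eq {E A s Y : Finset α} (hY : Y ⊆ s) (hE : E ∩ s = A) :
    E ∩ Y = A ∩ Y := by
  rw [← hE, inter_assoc, inter_eq_right.2 hY]

theorem mem_image_inter_insert_of_ne {R : Finset (Finset α)} {s Y A B C : Finset α} {a : α}
    (hY : Y ⊆ s) (hB : B ∈ R) (hC : C ∈ R) (hBs : B ⊆ insert a s) (hCs : C ⊆ insert a s)
    (hBC : B ≠ C) (hBA : B ∩ s = A) (hCA : C ∩ s = A) :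
    A ∩ Y ∈ R.image (· ∩ insert a Y) ∧ insert a (A ∩ Y) ∈ R.image (· ∩ insert a Y) := by
  have hsplit : ¬(a ∈ B ↔ a ∈ C) := fun h =>
    hBC (eq_of_inter_eq_of_mem_iff hBs hCs (hBA.trans hCA.symm) h)
  wlog haB : a ∈ B generalizing B C
  · exact this hC hB hCs hBs hBC.symm hCA hBA (by tauto) (by tauto)
  have haC : a ∉ C := by tauto
  refine ⟨mem_image.2 ⟨C, hC, ?_⟩, mem_image.2 ⟨B, hB, ?_⟩⟩
  · rw [inter_insert_of_notMem haC, inter_eq_inter_of_inter_eq hY hCA]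
  · rw [inter_insert_of_mem haB, inter_eq_inter_of_inter_eq hY hBA]

theorem two_mul_card_le_of_insert_mem {S F : Finset (Finset α)} {a : α}
    (h : ∀ T ∈ S, a ∉ T ∧ T ∈ F ∧ insert a T ∈ F) : 2 * #S ≤ #F := by
  have hdisj : Disjoint S (S.image (insert a)) := by
    refine disjoint_left.2 fun T hT hT' => ?_
    obtain ⟨T', -, rfl⟩ := mem_image.1 hT'
    exact (h _ hT).1 (mem_insert_self a T')
  have hinj : Set.InjOn (insert a) (S : Set (Finset α)) := fun T hT T' hT' hTT' => by
    rw [← erase_insert (h T hT).1, ← erase_insert (h T' hT').1, hTT']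
  calc 2 * #S = #(S ∪ S.image (insert a)) := by
        rw [card_union_of_disjoint hdisj, card_image_of_injOn hinj, two_mul]
    _ ≤ #F := card_le_card <| union_subset (fun T hT => (h T hT).2.1) fun T hT => by
        obtain ⟨T', hT', rfl⟩ := mem_image.1 hT
        exact (h T' hT').2.2

end Finset

open Classical in
/-- If `f_R(b) ≤ k` then `f_D(b-1) ≤ ⌊k/2⌋`, where `D` is the set of traces on `[n-1]`
arising from two distinct members of `R`. -/
theorem stmt3 (n b k : ℕ) (hb : 1 ≤ b) (hbn : b ≤ n) (R : Finset (Finset ℕ))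
    (hR : ∀ A ∈ R, A ⊆ Finset.range n)
    (hk : ∀ X ⊆ Finset.range n, X.card = b → (R.image (· ∩ X)).card ≤ k) :
    ∀ Y ⊆ Finset.range (n - 1), Y.card = b - 1 →
      (((R.image (· ∩ Finset.range (n - 1))).filter
        (fun A => ∃ B ∈ R, ∃ C ∈ R, B ≠ C ∧
          B ∩ Finset.range (n - 1) = A ∧ C ∩ Finset.range (n - 1) = A)).image
            (· ∩ Y)).card ≤ k / 2 := by
  intro Y hY hYcard
  have hrange : range n = insert (n - 1) (range (n - 1)) := by
    rw [← range_add_one, Nat.sub_add_cancel (by omega)]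
  have hmY : n - 1 ∉ Y := fun h => by simpa using hY h
  have hX : insert (n - 1) Y ⊆ range n := hrange ▸ insert_subset_insert _ hY
  have hXcard : #(insert (n - 1) Y) = b := by rw [card_insert_of_notMem hmY]; omega
  rw [Nat.le_div_iff_mul_le two_pos, mul_comm]
  refine (two_mul_card_le_of_insert_mem (a := n - 1) fun T hT => ?_).trans (hk _ hX hXcard)
  obtain ⟨A, hA, rfl⟩ := mem_image.1 hT
  obtain ⟨-, B, hB, C, hC, hBC, hBA, hCA⟩ := mem_filter.1 hA
  exact ⟨fun h => hmY (mem_inter.1 h).2, mem_image_inter_insert_of_ne hY hB hC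
    (hrange ▸ hR B hB) (hrange ▸ hR C hC) hBC hBA hCA⟩
end

section
/- Fix integers n, b, i with 1 ≤ i and b ≥ 1. Partition [n] into i parts of sizes as equal as possible and let R be the family of all i-element subsets of [n] containing exactly one element from each part. Then |R| ≥ (⌊n/i⌋)^i (so |R| = Ω(n^i)), and f_R(b) ≤ λ_i(b), where λ_i(b) = max over compositions b = b_1 + ... + b_i of ∏_{j=1}^{i}(b_j + 1). -/
/-!
Index the parts by `p x = x % i`. A set in `R` is exactly a transversal of the fibres of `p`
on `[n]`, so `|R|` is the product of the fibre sizes, each at least `⌊n/i⌋`. For the trace on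
`X`, split `A ∩ X` along the fibres: each piece is a subset of `X ∩ p⁻¹(j)` with at most one
element, and the pieces determine `A ∩ X`. Hence at most `∏ (|X ∩ p⁻¹(j)| + 1)` traces occur,
and the `b_j = |X ∩ p⁻¹(j)|` add up to `|X| = b`.
-/

open Finset

lemma Finset.card_filter_powerset_card_le_one {α : Type*} [DecidableEq α] (s : Finset α) :
    #{T ∈ s.powerset | #T ≤ 1} = #s + 1 := by
  have hsplit : {T ∈ s.powerset | #T ≤ 1} = insert ∅ (s.map ⟨({·}), singleton_injective⟩) := by
    ext T
    simp only [mem_filter, mem_powerset, mem_insert, mem_map, Function.Embedding.coeFn_mk]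
    constructor
    · rintro ⟨hT, hcard⟩
      rcases Nat.le_one_iff_eq_zero_or_eq_one.mp hcard with h0 | h1
      · exact .inl (card_eq_zero.mp h0)
      · obtain ⟨a, rfl⟩ := card_eq_one.mp h1
        exact .inr ⟨a, hT (mem_singleton_self a), rfl⟩
    · rintro (rfl | ⟨a, ha, rfl⟩)
      · simp
      · simp [ha]
  rw [hsplit, card_insert_of_notMem (by simp), card_map, add_comm]

section Transversals

variable {α ι : Type*}

def transversals [DecidableEq α] [Fintype ι] [DecidableEq ι] (p : α → ι) (U : Finset α) :
    Finset (Finset α) :=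
  {A ∈ U.powerset | ∀ j, #{x ∈ A | p x = j} = 1}

lemma card_eq_card_of_forall_card_filter_eq_one [Fintype ι] [DecidableEq ι] (p : α → ι)
    {A : Finset α} (hA : ∀ j, #{x ∈ A | p x = j} = 1) : #A = Fintype.card ι := by
  rw [card_eq_sum_card_fiberwise (fun x _ => mem_univ (p x))]
  simp [hA]

lemma filter_fibers_injective [DecidableEq ι] (p : α → ι) :
    Function.Injective fun (S : Finset α) (j : ι) => {x ∈ S | p x = j} := by
  intro S S' h
  ext x
  simpa using congrArg (x ∈ ·) (congrFun h (p x))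

lemma filter_image_eq_singleton [DecidableEq α] [Fintype ι] [DecidableEq ι] {p : α → ι}
    {f : ι → α} (hf : ∀ j, p (f j) = j) (j : ι) :
    {x ∈ univ.image f | p x = j} = {f j} := by
  ext x
  simp only [mem_filter, mem_image, mem_univ, true_and, mem_singleton]
  constructor
  · rintro ⟨⟨k, rfl⟩, rfl⟩
    rw [hf]
  · rintro rfl
    exact ⟨⟨j, rfl⟩, hf j⟩

lemma card_transversals [DecidableEq α] [Fintype ι] [DecidableEq ι] (p : α → ι) (U : Finset α) :
    #(transversals p U) = ∏ j, #{x ∈ U | p x = j} := by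
  rw [← Fintype.card_piFinset]
  symm
  refine card_bij (fun f _ => univ.image f) ?_ ?_ ?_
  · intro f hf
    simp only [Fintype.mem_piFinset, mem_filter] at hf
    refine mem_filter.mpr ⟨mem_powerset.mpr ?_, fun j => ?_⟩
    · simpa [image_subset_iff] using fun j => (hf j).1
    · rw [filter_image_eq_singleton (fun j => (hf j).2), card_singleton]
  · intro f hf g hg hfg
    simp only [Fintype.mem_piFinset, mem_filter] at hf hg
    funext j
    have hfj := filter_image_eq_singleton (fun j => (hf j).2) j
    rwa [hfg, filter_image_eq_singleton (fun j => (hg j).2), singleton_inj, eq_comm] at hfj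
  · intro A hA
    obtain ⟨hAU, hA⟩ := mem_filter.mp hA
    choose f hf using fun j => card_eq_one.mp (hA j)
    have hfA : ∀ j, f j ∈ A ∧ p (f j) = j := fun j =>
      mem_filter.mp ((hf j).symm ▸ mem_singleton_self (f j))
    refine ⟨f, ?_, ?_⟩
    · simpa using fun j => ⟨mem_powerset.mp hAU (hfA j).1, (hfA j).2⟩
    · ext x
      simp only [mem_image, mem_univ, true_and]
      refine ⟨fun ⟨j, hj⟩ => hj ▸ (hfA j).1, fun hx => ⟨p x, ?_⟩⟩
      have hx' : x ∈ {y ∈ A | p y = p x} := mem_filter.mpr ⟨hx, rfl⟩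
      rw [hf, mem_singleton] at hx'
      exact hx'.symm

lemma card_image_inter_le_prod [DecidableEq α] [Fintype ι] [DecidableEq ι] (p : α → ι)
    (𝒜 : Finset (Finset α)) (h𝒜 : ∀ A ∈ 𝒜, ∀ j, #{x ∈ A | p x = j} ≤ 1) (X : Finset α) :
    #(𝒜.image (· ∩ X)) ≤ ∏ j, (#{x ∈ X | p x = j} + 1) := by
  calc #(𝒜.image (· ∩ X))
      ≤ #(Fintype.piFinset fun j => {T ∈ {x ∈ X | p x = j}.powerset | #T ≤ 1}) := by
        refine card_le_card_of_injOn _ ?_ (filter_fibers_injective p).injOn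
        rintro _ hS
        obtain ⟨A, hA, rfl⟩ := mem_image.mp hS
        refine Fintype.mem_piFinset.mpr fun j => ?_
        refine mem_filter.mpr ⟨mem_powerset.mpr ?_, ?_⟩
        · exact filter_subset_filter _ inter_subset_right
        · exact (card_le_card (filter_subset_filter _ inter_subset_left)).trans (h𝒜 A hA j)
    _ = ∏ j, (#{x ∈ X | p x = j} + 1) := by
        simp only [Fintype.card_piFinset, card_filter_powerset_card_le_one]

lemma card_image_inter_transversals_le_prod [DecidableEq α] [Fintype ι] [DecidableEq ι]
    (p : α → ι) (U X : Finset α) :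
    #((transversals p U).image (· ∩ X)) ≤ ∏ j, (#{x ∈ X | p x = j} + 1) :=
  card_image_inter_le_prod p _ (fun _ hA j => ((mem_filter.mp hA).2 j).le) X

end Transversals

lemma div_le_card_filter_mod_eq {n i j : ℕ} (hj : j < i) :
    n / i ≤ #{x ∈ range n | x % i = j} := by
  have hi : 0 < i := by omega
  refine (card_range (n / i)).symm.le.trans (card_le_card_of_injOn (fun k => j + i * k) ?_ ?_)
  · intro k hk
    simp only [coe_range, Set.mem_Iio] at hk
    simp only [coe_filter, mem_range, Set.mem_ofPred_eq, Nat.add_mul_mod_self_left,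
      Nat.mod_eq_of_lt hj, and_true]
    calc j + i * k < i * (k + 1) := by nlinarith
      _ ≤ i * (n / i) := Nat.mul_le_mul_left i hk
      _ ≤ n := Nat.mul_div_le n i
  · intro k _ k' _ h
    exact Nat.eq_of_mul_eq_mul_left hi (Nat.add_left_cancel h)

theorem stmt5_general (n b i : ℕ) (hi : 1 ≤ i)
    (R : Finset (Finset ℕ))
    (hRdef : R = (Finset.range n).powerset.filter
      (fun A => A.card = i ∧ ∀ j < i, (A.filter (fun x => x % i = j)).card = 1)) :
    (n / i) ^ i ≤ R.card ∧
    ∀ X ⊆ Finset.range n, X.card = b →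
      ∃ f : Fin i → ℕ, (∑ j, f j = b) ∧
        (R.image (· ∩ X)).card ≤ ∏ j, (f j + 1) := by
  set p : ℕ → Fin i := fun x => ⟨x % i, Nat.mod_lt x hi⟩
  have hp (S : Finset ℕ) (j : Fin i) : {x ∈ S | p x = j} = {x ∈ S | x % i = j} :=
    filter_congr fun _ _ => Fin.ext_iff
  have hR : R = transversals p (range n) := by
    ext A
    simp only [hRdef, transversals, mem_filter, hp]
    refine and_congr_right fun _ =>
      ⟨fun hA j => hA.2 j j.isLt, fun hA => ⟨?_, fun j hj => hA ⟨j, hj⟩⟩⟩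
    simpa using card_eq_card_of_forall_card_filter_eq_one p (by simpa [hp] using hA)
  refine ⟨?_, fun X _ hX => ⟨fun j => #{x ∈ X | p x = j}, ?_, ?_⟩⟩
  · rw [hR, card_transversals]
    calc (n / i) ^ i = ∏ _j : Fin i, n / i := by simp
      _ ≤ _ := prod_le_prod' fun j _ => hp (range n) j ▸ div_le_card_filter_mod_eq j.isLt
  · rw [← hX, card_eq_sum_card_fiberwise (fun x _ => mem_univ (p x))]
  · exact hR ▸ card_image_inter_transversals_le_prod p (range n) X

/-- The lower-bound construction: split `[n]` into `i` near-equal parts (residue classes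
mod `i`) and take all sets with exactly one element per part. Then `|R| ≥ ⌊n/i⌋^i` and
the trace of `R` on any `b`-set has size at most `λ_i(b) = max ∏ (b_j+1)` over
compositions `b = b_1 + ⋯ + b_i`. -/
theorem stmt5 (n b i : ℕ) (hi : 1 ≤ i) (hb : 1 ≤ b)
    (R : Finset (Finset ℕ))
    (hRdef : R = (Finset.range n).powerset.filter
      (fun A => A.card = i ∧ ∀ j < i, (A.filter (fun x => x % i = j)).card = 1)) :
    (n / i) ^ i ≤ R.card ∧
    ∀ X ⊆ Finset.range n, X.card = b →
      ∃ f : Fin i → ℕ, (∑ j, f j = b) ∧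
        (R.image (· ∩ X)).card ≤ ∏ j, (f j + 1) :=
  stmt5_general n b i hi R hRdef
end

section
/- Let F be a set of t ≥ 2 distinct permutations of [n]. Then the set I_F of distinguishing pairs over all pairs of permutations from F has size at most t - 1. -/
/-!
Let `p₀` be the lexicographically smallest pair of `I_F`, and split `F` into the permutations
that invert `p₀` and those that do not; both parts are nonempty, since `p₀` distinguishes two
members of `F`. If `σ, τ` lie on opposite sides, `p₀` separates them, so their distinguishing
pair is `≤ p₀`, hence equal to `p₀` by minimality. Otherwise their distinguishing pair belongs to
`I` of one of the two parts. By induction, `|I_F| ≤ 1 + (t₁ - 1) + (t₀ - 1) = t - 1`.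
-/

/-- The pair `p = (p₁, p₂)` with `p₁ < p₂` is an inversion of `σ` if `σ⁻¹ p₂ < σ⁻¹ p₁`. -/
def isInv {n : ℕ} (σ : Equiv.Perm (Fin n)) (p : Fin n × Fin n) : Prop :=
  p.1 < p.2 ∧ σ⁻¹ p.2 < σ⁻¹ p.1

/-- Lexicographic order on pairs. -/
def lexLE {n : ℕ} (p q : Fin n × Fin n) : Prop :=
  p.1 < q.1 ∨ (p.1 = q.1 ∧ p.2 ≤ q.2)

/-- `p` is the distinguishing pair of the distinct permutations `σ, τ`: the
lexicographically smallest pair that is an inversion of exactly one of them. -/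
def isDistPair {n : ℕ} (σ τ : Equiv.Perm (Fin n)) (p : Fin n × Fin n) : Prop :=
  p.1 < p.2 ∧ ¬ (isInv σ p ↔ isInv τ p) ∧
    ∀ q : Fin n × Fin n, q.1 < q.2 → ¬ (isInv σ q ↔ isInv τ q) → lexLE p q

open Classical in
/-- `I_F`: the set of distinguishing pairs of pairs of distinct permutations of `F`. -/
noncomputable def distPairs {n : ℕ} (F : Finset (Equiv.Perm (Fin n))) :
    Finset (Fin n × Fin n) :=
  Finset.univ.filter (fun p => ∃ σ ∈ F, ∃ τ ∈ F, σ ≠ τ ∧ isDistPair σ τ p)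

open Classical in
/-- `R(σ)`: the elements of `I_F` that are inversions of `σ`. -/
noncomputable def invSet {n : ℕ} (F : Finset (Equiv.Perm (Fin n)))
    (σ : Equiv.Perm (Fin n)) : Finset (Fin n × Fin n) :=
  (distPairs F).filter (fun p => isInv σ p)

/-- The restriction of `σ` to `X`, encoded as the induced order relation on `X`. -/
def restrictMap {n : ℕ} (X : Finset (Fin n)) (σ : Equiv.Perm (Fin n)) :
    Fin n → Fin n → Prop :=
  fun u v => u ∈ X ∧ v ∈ X ∧ σ⁻¹ u < σ⁻¹ v

variable {n : ℕ}

instance (σ : Equiv.Perm (Fin n)) (p : Fin n × Fin n) : Decidable (isInv σ p) :=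
  inferInstanceAs (Decidable (_ ∧ _))

lemma lexLE_iff_toLex_le {p q : Fin n × Fin n} : lexLE p q ↔ toLex p ≤ toLex q :=
  Prod.Lex.le_iff.symm

lemma lexLE_antisymm {p q : Fin n × Fin n} (hpq : lexLE p q) (hqp : lexLE q p) : p = q :=
  toLex.injective <| le_antisymm (lexLE_iff_toLex_le.mp hpq) (lexLE_iff_toLex_le.mp hqp)

lemma exists_lexLE_min (S : Finset (Fin n × Fin n)) (hS : S.Nonempty) :
    ∃ p ∈ S, ∀ q ∈ S, lexLE p q := by
  simpa only [lexLE_iff_toLex_le] using S.exists_min_image toLex hS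

lemma mem_distPairs {F : Finset (Equiv.Perm (Fin n))} {p : Fin n × Fin n} :
    p ∈ distPairs F ↔ ∃ σ ∈ F, ∃ τ ∈ F, σ ≠ τ ∧ isDistPair σ τ p := by
  simp [distPairs]

lemma exists_isInv_and_exists_not_isInv_of_mem_distPairs {F : Finset (Equiv.Perm (Fin n))}
    {p : Fin n × Fin n} (hp : p ∈ distPairs F) :
    (∃ σ ∈ F, isInv σ p) ∧ ∃ σ ∈ F, ¬ isInv σ p := by
  obtain ⟨σ, hσ, τ, hτ, -, -, hsep, -⟩ := mem_distPairs.mp hp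
  by_cases hσp : isInv σ p
  · exact ⟨⟨σ, hσ, hσp⟩, τ, hτ, fun hτp => hsep (iff_of_true hσp hτp)⟩
  · exact ⟨⟨τ, hτ, by_contra fun hτp => hsep (iff_of_false hσp hτp)⟩, σ, hσ, hσp⟩

lemma distPairs_subset_insert_union {F : Finset (Equiv.Perm (Fin n))} {p₀ : Fin n × Fin n}
    (hp₀ : p₀ ∈ distPairs F) (hmin : ∀ q ∈ distPairs F, lexLE p₀ q) :
    distPairs F ⊆ insert p₀
      (distPairs (F.filter (isInv · p₀)) ∪ distPairs (F.filter (¬ isInv · p₀))) := by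
  obtain ⟨-, -, -, -, -, hp₀lt, -⟩ := mem_distPairs.mp hp₀
  intro p hp
  obtain ⟨σ, hσ, τ, hτ, hne, hd⟩ := mem_distPairs.mp hp
  simp only [Finset.mem_insert, Finset.mem_union, mem_distPairs, Finset.mem_filter]
  by_cases hsame : isInv σ p₀ ↔ isInv τ p₀
  · by_cases hσp₀ : isInv σ p₀
    · exact Or.inr (Or.inl ⟨σ, ⟨hσ, hσp₀⟩, τ, ⟨hτ, hsame.mp hσp₀⟩, hne, hd⟩)
    · exact Or.inr (Or.inr ⟨σ, ⟨hσ, hσp₀⟩, τ, ⟨hτ, mt hsame.mpr hσp₀⟩, hne, hd⟩)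
  · exact Or.inl (lexLE_antisymm (hd.2.2 p₀ hp₀lt hsame) (hmin p hp))

theorem card_distPairs_le (F : Finset (Equiv.Perm (Fin n))) :
    (distPairs F).card ≤ F.card - 1 := by
  induction F using Finset.strongInduction with
  | H F ih =>
  rcases (distPairs F).eq_empty_or_nonempty with hempty | hne
  · simp [hempty]
  obtain ⟨p₀, hp₀, hmin⟩ := exists_lexLE_min _ hne
  obtain ⟨⟨σ, hσ, hσp₀⟩, τ, hτ, hτp₀⟩ := exists_isInv_and_exists_not_isInv_of_mem_distPairs hp₀
  set F₁ := F.filter (isInv · p₀)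
  set F₀ := F.filter (¬ isInv · p₀)
  have hF₁ : 1 ≤ F₁.card := Finset.card_pos.mpr ⟨σ, Finset.mem_filter.mpr ⟨hσ, hσp₀⟩⟩
  have hF₀ : 1 ≤ F₀.card := Finset.card_pos.mpr ⟨τ, Finset.mem_filter.mpr ⟨hτ, hτp₀⟩⟩
  have ih₁ := ih F₁ (Finset.filter_ssubset.mpr ⟨τ, hτ, hτp₀⟩)
  have ih₀ := ih F₀ (Finset.filter_ssubset.mpr ⟨σ, hσ, not_not.mpr hσp₀⟩)
  have hsplit : F₁.card + F₀.card = F.card := Finset.card_filter_add_card_filter_not _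
  calc (distPairs F).card
      ≤ (distPairs F₁ ∪ distPairs F₀).card + 1 :=
        (Finset.card_le_card (distPairs_subset_insert_union hp₀ hmin)).trans
          (Finset.card_insert_le _ _)
    _ ≤ (distPairs F₁).card + (distPairs F₀).card + 1 :=
        Nat.add_le_add_right (Finset.card_union_le _ _) 1
    _ ≤ F.card - 1 := by omega

theorem stmt11_general {n : ℕ} (F : Finset (Equiv.Perm (Fin n))) :
    (distPairs F).card ≤ F.card - 1 :=
  card_distPairs_le F

/-- A family of t ≥ 2 permutations of [n] has at most t - 1 distinguishing pairs. -/
theorem stmt11 {n : ℕ} (F : Finset (Equiv.Perm (Fin n))) (hF : 2 ≤ F.card) :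
    (distPairs F).card ≤ F.card - 1 :=
  stmt11_general F
end

section
/- Let F be a family of permutations of [n], I_F its set of distinguishing pairs, and R(F) the associated set system on ground set I_F (each permutation σ mapped to the set of its inversions lying in I_F). Then for every m ≥ 2, f_{R(F)}(⌊m/2⌋) ≤ φ_F(m), where φ_F is the shatter function of F. -/
/-! Pairs in `I_F` spanning at most `m` points are read off from restrictions to an `m`-set
`X` containing those points, so distinct traces on them come from distinct restrictions to `X`. -/

theorem Finset.card_image_fst_union_image_snd_le {α : Type*} [DecidableEq α]
    (Y : Finset (α × α)) : (Y.image Prod.fst ∪ Y.image Prod.snd).card ≤ 2 * Y.card :=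
  calc (Y.image Prod.fst ∪ Y.image Prod.snd).card
      ≤ (Y.image Prod.fst).card + (Y.image Prod.snd).card := card_union_le _ _
    _ ≤ Y.card + Y.card := add_le_add card_image_le card_image_le
    _ = 2 * Y.card := (two_mul _).symm

open Classical in
theorem invSet_inter_eq_filter_restrictMap {n : ℕ} {F : Finset (Equiv.Perm (Fin n))}
    {X : Finset (Fin n)} {Y : Finset (Fin n × Fin n)} (hY : Y ⊆ distPairs F)
    (hYX : ∀ p ∈ Y, p.1 ∈ X ∧ p.2 ∈ X) (σ : Equiv.Perm (Fin n)) :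
    invSet F σ ∩ Y = Y.filter (fun p => p.1 < p.2 ∧ restrictMap X σ p.2 p.1) := by
  ext p
  simp only [invSet, Finset.mem_inter, Finset.mem_filter]
  simp only [restrictMap, isInv]
  constructor
  · rintro ⟨⟨-, hlt, hinv⟩, hpY⟩
    exact ⟨hpY, hlt, (hYX p hpY).2, (hYX p hpY).1, hinv⟩
  · rintro ⟨hpY, hlt, -, -, hinv⟩
    exact ⟨⟨hY hpY, hlt, hinv⟩, hpY⟩

open Classical in
theorem card_image_inter_le_card_image_restrictMap {n : ℕ} {F : Finset (Equiv.Perm (Fin n))}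
    {X : Finset (Fin n)} {Y : Finset (Fin n × Fin n)} (hY : Y ⊆ distPairs F)
    (hYX : ∀ p ∈ Y, p.1 ∈ X ∧ p.2 ∈ X) :
    ((F.image (invSet F)).image (· ∩ Y)).card ≤ (F.image (restrictMap X)).card := by
  have hfactor : (F.image (invSet F)).image (· ∩ Y) =
      (F.image (restrictMap X)).image
        (fun r => Y.filter (fun p => p.1 < p.2 ∧ r p.2 p.1)) := by
    simp only [Finset.image_image]
    exact Finset.image_congr fun σ _ => invSet_inter_eq_filter_restrictMap hY hYX σ
  exact hfactor ▸ Finset.card_image_le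

open Classical in
theorem stmt13_general {n : ℕ} (F : Finset (Equiv.Perm (Fin n))) (m k : ℕ)
    (hmn : m ≤ n)
    (hφ : ∀ X : Finset (Fin n), X.card = m → (F.image (restrictMap X)).card ≤ k) :
    ∀ Y ⊆ distPairs F, Y.card = m / 2 →
      ((F.image (invSet F)).image (· ∩ Y)).card ≤ k := by
  intro Y hY hYcard
  have hends : (Y.image Prod.fst ∪ Y.image Prod.snd).card ≤ m := by
    have := Y.card_image_fst_union_image_snd_le
    omega
  obtain ⟨X, hendsX, -, hXcard⟩ :=
    Finset.exists_subsuperset_card_eq (Finset.subset_univ _) hends (by simpa using hmn)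
  have hYX : ∀ p ∈ Y, p.1 ∈ X ∧ p.2 ∈ X := fun p hp =>
    ⟨hendsX (Finset.mem_union_left _ (Finset.mem_image_of_mem _ hp)),
      hendsX (Finset.mem_union_right _ (Finset.mem_image_of_mem _ hp))⟩
  exact (card_image_inter_le_card_image_restrictMap hY hYX).trans (hφ X hXcard)

open Classical in
/-- Reduction from permutations to set systems: f_{R(F)}(⌊m/2⌋) ≤ φ_F(m). -/
theorem stmt13 {n : ℕ} (F : Finset (Equiv.Perm (Fin n))) (m k : ℕ)
    (hm : 2 ≤ m) (hmn : m ≤ n)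
    (hφ : ∀ X : Finset (Fin n), X.card = m → (F.image (restrictMap X)).card ≤ k) :
    ∀ Y ⊆ distPairs F, Y.card = m / 2 →
      ((F.image (invSet F)).image (· ∩ Y)).card ≤ k :=
  stmt13_general F m k hmn hφ
end

section
/- Let F_1 be the family of permutations of [n] consisting of the identity together with every permutation obtained from the identity by transposing a single pair of the form (2i, 2i+1). Then |F_1| = 1 + ⌊n/2⌋ and φ_{F_1}(m) = ⌊m/2⌋ + 1 for every m with 2 ≤ m ≤ n. -/
open Finset

section RestrictMap

variable {n : ℕ}

lemma restrictMap_swap_iff (X : Finset (Fin n)) (a b u v : Fin n) :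
    restrictMap X (Equiv.swap a b) u v ↔
      u ∈ X ∧ v ∈ X ∧ Equiv.swap a b u < Equiv.swap a b v := by
  rw [restrictMap, Equiv.swap_inv]

lemma restrictMap_of_fixed {X : Finset (Fin n)} {σ : Equiv.Perm (Fin n)} {u v : Fin n}
    (hu : u ∈ X) (hv : v ∈ X) (huv : u < v) (hσu : σ u = u) (hσv : σ v = v) :
    restrictMap X σ u v := by
  refine ⟨hu, hv, ?_⟩
  rwa [Equiv.Perm.inv_eq_iff_eq.mpr hσu.symm, Equiv.Perm.inv_eq_iff_eq.mpr hσv.symm]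

lemma swap_lt_swap_iff_of_adjacent {a b u v : Fin n} (hab : (b : ℕ) = a + 1)
    (h : (u ≠ a ∧ v ≠ a) ∨ (u ≠ b ∧ v ≠ b)) :
    Equiv.swap a b u < Equiv.swap a b v ↔ u < v := by
  rw [Equiv.swap_apply_def, Equiv.swap_apply_def]
  split_ifs <;> simp only [Fin.ext_iff, Fin.lt_def, ne_eq] at * <;> omega

lemma restrictMap_swap_of_adjacent {X : Finset (Fin n)} {a b : Fin n}
    (hab : (b : ℕ) = a + 1) (h : a ∉ X ∨ b ∉ X) :
    restrictMap X (Equiv.swap a b) = restrictMap X 1 := by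
  funext u v
  rw [restrictMap_swap_iff, eq_iff_iff]
  simp only [restrictMap, inv_one, Equiv.Perm.coe_one, id_eq]
  refine and_congr_right fun hu => and_congr_right fun hv => ?_
  refine swap_lt_swap_iff_of_adjacent hab ?_
  rcases h with h | h
  · exact Or.inl ⟨ne_of_mem_of_not_mem hu h, ne_of_mem_of_not_mem hv h⟩
  · exact Or.inr ⟨ne_of_mem_of_not_mem hu h, ne_of_mem_of_not_mem hv h⟩

end RestrictMap

namespace PairSwap

variable {n : ℕ}

def fst (k : Fin (n / 2)) : Fin n := ⟨2 * k, by omega⟩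

def snd (k : Fin (n / 2)) : Fin n := ⟨2 * k + 1, by omega⟩

def perm (k : Fin (n / 2)) : Equiv.Perm (Fin n) := Equiv.swap (fst k) (snd k)

def coveredPairs (X : Finset (Fin n)) : Finset (Fin (n / 2)) :=
  {k | fst k ∈ X ∧ snd k ∈ X}

lemma fst_lt_snd (k : Fin (n / 2)) : fst k < snd k := by
  simp [fst, snd, Fin.lt_def]

lemma fst_injective : Function.Injective (fst (n := n)) := by
  intro k k' h
  simp only [fst, Fin.ext_iff] at h
  omega

lemma snd_injective : Function.Injective (snd (n := n)) := by
  intro k k' h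
  simp only [snd, Fin.ext_iff] at h
  omega

lemma fst_ne_snd (k k' : Fin (n / 2)) : fst k ≠ snd k' := by
  simp only [fst, snd, ne_eq, Fin.ext_iff]
  omega

lemma perm_ne_one (k : Fin (n / 2)) : perm k ≠ 1 :=
  fun h => fst_ne_snd k k (Equiv.swap_eq_one_iff.mp h)

lemma perm_apply_fst_of_ne {k k' : Fin (n / 2)} (h : k ≠ k') : perm k' (fst k) = fst k :=
  Equiv.swap_apply_of_ne_of_ne (fun e => h (fst_injective e)) (fst_ne_snd k k')

lemma perm_apply_snd_of_ne {k k' : Fin (n / 2)} (h : k ≠ k') : perm k' (snd k) = snd k :=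
  Equiv.swap_apply_of_ne_of_ne (fst_ne_snd k' k).symm (fun e => h (snd_injective e))

lemma perm_injective : Function.Injective (perm (n := n)) := by
  intro k k' h
  by_contra hne
  have hfix : perm k (fst k) = fst k := by rw [h]; exact perm_apply_fst_of_ne hne
  rw [perm, Equiv.swap_apply_left] at hfix
  exact fst_ne_snd k k hfix.symm

lemma not_restrictMap_perm (X : Finset (Fin n)) (k : Fin (n / 2)) :
    ¬ restrictMap X (perm k) (fst k) (snd k) := by
  rw [perm, restrictMap_swap_iff, Equiv.swap_apply_left, Equiv.swap_apply_right]
  exact fun h => lt_asymm h.2.2 (fst_lt_snd k)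

lemma restrictMap_of_ne_perm {X : Finset (Fin n)} {k : Fin (n / 2)} (hk : k ∈ coveredPairs X)
    {σ : Equiv.Perm (Fin n)} (hσ : σ = 1 ∨ ∃ k', k' ≠ k ∧ σ = perm k') :
    restrictMap X σ (fst k) (snd k) := by
  simp only [coveredPairs, mem_filter, mem_univ, true_and] at hk
  refine restrictMap_of_fixed hk.1 hk.2 (fst_lt_snd k) ?_ ?_ <;>
  rcases hσ with rfl | ⟨k', hk', rfl⟩
  exacts [rfl, perm_apply_fst_of_ne hk'.symm, rfl, perm_apply_snd_of_ne hk'.symm]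

lemma restrictMap_perm_of_not_mem {X : Finset (Fin n)} {k : Fin (n / 2)}
    (hk : k ∉ coveredPairs X) : restrictMap X (perm k) = restrictMap X 1 := by
  simp only [coveredPairs, mem_filter, mem_univ, true_and, not_and_or] at hk
  exact restrictMap_swap_of_adjacent rfl hk

open Classical in
lemma filter_eq_insert_image :
    (univ.filter (fun σ : Equiv.Perm (Fin n) => σ = 1 ∨ ∃ k, ∃ h : 2 * k + 1 < n,
      σ = Equiv.swap ⟨2 * k, Nat.lt_of_succ_lt h⟩ ⟨2 * k + 1, h⟩)) =
      insert 1 (univ.image perm) := by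
  ext σ
  simp only [mem_filter, mem_univ, true_and, mem_insert, mem_image]
  refine or_congr_right ⟨?_, ?_⟩
  · rintro ⟨k, hk, rfl⟩
    exact ⟨⟨k, by omega⟩, rfl⟩
  · rintro ⟨k, rfl⟩
    exact ⟨k, by omega, rfl⟩

lemma card_insert_image_perm : (insert 1 (univ.image (perm (n := n)))).card = 1 + n / 2 := by
  rw [card_insert_of_notMem, card_image_of_injective _ perm_injective, card_univ,
    Fintype.card_fin, add_comm]
  simpa using fun k => perm_ne_one k

lemma image_restrictMap (X : Finset (Fin n)) :
    (insert 1 (univ.image perm)).image (restrictMap X) =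
      insert (restrictMap X 1) ((coveredPairs X).image (fun k => restrictMap X (perm k))) := by
  ext r
  simp only [mem_image, mem_insert, mem_univ, true_and]
  constructor
  · rintro ⟨σ, rfl | ⟨k, rfl⟩, rfl⟩
    · exact Or.inl rfl
    · by_cases hk : k ∈ coveredPairs X
      · exact Or.inr ⟨k, hk, rfl⟩
      · exact Or.inl (restrictMap_perm_of_not_mem hk)
  · rintro (rfl | ⟨k, -, rfl⟩)
    exacts [⟨1, Or.inl rfl, rfl⟩, ⟨perm k, Or.inr ⟨k, rfl⟩, rfl⟩]

lemma card_image_restrictMap (X : Finset (Fin n)) :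
    ((insert 1 (univ.image perm)).image (restrictMap X)).card = (coveredPairs X).card + 1 := by
  have hinj : Set.InjOn (fun k => restrictMap X (perm k)) (coveredPairs X) := by
    intro k hk k' _ (h : restrictMap X (perm k) = restrictMap X (perm k'))
    by_contra hne
    exact not_restrictMap_perm X k
      (h ▸ restrictMap_of_ne_perm hk (Or.inr ⟨k', Ne.symm hne, rfl⟩))
  have hone : restrictMap X 1 ∉ (coveredPairs X).image (fun k => restrictMap X (perm k)) := by
    intro h
    obtain ⟨k, hk, h⟩ := mem_image.mp h
    exact not_restrictMap_perm X k (h ▸ restrictMap_of_ne_perm hk (Or.inl rfl))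
  rw [image_restrictMap, card_insert_of_notMem hone, card_image_of_injOn hinj]

lemma two_mul_card_coveredPairs_le (X : Finset (Fin n)) :
    2 * (coveredPairs X).card ≤ X.card := by
  have hsub : (coveredPairs X).image fst ∪ (coveredPairs X).image snd ⊆ X := by
    simp only [union_subset_iff, image_subset_iff, coveredPairs, mem_filter, mem_univ,
      true_and]
    exact ⟨fun k hk => hk.1, fun k hk => hk.2⟩
  have hdisj : Disjoint ((coveredPairs X).image fst) ((coveredPairs X).image snd) := by
    simp only [disjoint_left, mem_image, not_exists, not_and]
    rintro _ ⟨k, -, rfl⟩ k' - h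
    exact fst_ne_snd k k' h.symm
  calc 2 * (coveredPairs X).card
      = ((coveredPairs X).image fst ∪ (coveredPairs X).image snd).card := by
        rw [card_union_of_disjoint hdisj, card_image_of_injective _ fst_injective,
          card_image_of_injective _ snd_injective, two_mul]
    _ ≤ X.card := card_le_card hsub

lemma coveredPairs_filter_val_lt (m : ℕ) :
    coveredPairs (univ.filter fun a : Fin n => (a : ℕ) < m) =
      univ.filter fun k : Fin (n / 2) => (k : ℕ) < m / 2 := by
  ext k
  simp only [coveredPairs, fst, snd, mem_filter, mem_univ, true_and]
  omega

end PairSwap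

open PairSwap

open Classical in
/-- The family F₁ of permutations differing from the identity by the transposition of a
single pair (2i, 2i+1) has size 1 + ⌊n/2⌋ and shatter function φ(m) = ⌊m/2⌋ + 1. -/
theorem stmt14 (n : ℕ) (F : Finset (Equiv.Perm (Fin n)))
    (hF : F = Finset.univ.filter (fun σ => σ = 1 ∨
      ∃ k, ∃ h : 2 * k + 1 < n, σ = Equiv.swap ⟨2 * k, by omega⟩ ⟨2 * k + 1, h⟩)) :
    F.card = 1 + n / 2 ∧
    ∀ m, 2 ≤ m → m ≤ n →
      ((∀ X : Finset (Fin n), X.card = m →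
          (F.image (restrictMap X)).card ≤ m / 2 + 1) ∧
       (∃ X : Finset (Fin n), X.card = m ∧
          (F.image (restrictMap X)).card = m / 2 + 1)) := by
  rw [hF.trans filter_eq_insert_image]
  refine ⟨card_insert_image_perm, fun m _ hmn => ⟨fun X hX => ?_, ?_⟩⟩
  · have := two_mul_card_coveredPairs_le X
    rw [card_image_restrictMap]
    omega
  · refine ⟨univ.filter fun a : Fin n => (a : ℕ) < m, ?_, ?_⟩
    · rw [Fin.card_filter_val_lt]
      omega
    · rw [card_image_restrictMap, coveredPairs_filter_val_lt, Fin.card_filter_val_lt]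
      omega
end

section
/- Let F_2 be the family of all permutations of [n] that differ from the identity by transposing an arbitrary subset of the pairs {2i, 2i+1}, i = 1, ..., ⌊n/2⌋. Then |F_2| = 2^{⌊n/2⌋} and φ_{F_2}(m) = 2^{⌊m/2⌋} for every m with 2 ≤ m ≤ n. -/
open Finset

/-- The other element of the block `{2k, 2k + 1}` containing `x`. -/
def partner (x : ℕ) : ℕ := 2 * (x / 2) + (1 - x % 2)

lemma partner_partner (x : ℕ) : partner (partner x) = x := by
  unfold partner; omega

lemma partner_div_two (x : ℕ) : partner x / 2 = x / 2 := by
  unfold partner; omega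

def swapFun (n : ℕ) (S : Finset ℕ) (x : Fin n) : Fin n :=
  if h : (x : ℕ) / 2 ∈ S ∧ partner x < n then ⟨partner x, h.2⟩ else x

lemma swapFun_involutive (n : ℕ) (S : Finset ℕ) : Function.Involutive (swapFun n S) := by
  intro x
  by_cases h : (x : ℕ) / 2 ∈ S ∧ partner x < n
  · have h' : partner x / 2 ∈ S ∧ partner (partner x) < n := by
      rw [partner_div_two, partner_partner]; exact ⟨h.1, x.isLt⟩
    have hx : swapFun n S x = ⟨partner x, h.2⟩ := dif_pos h
    rw [hx, swapFun, dif_pos h']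
    exact Fin.ext (partner_partner x)
  · have hx : swapFun n S x = x := dif_neg h
    rw [hx, hx]

/-- The permutation transposing `2k` and `2k + 1` for every `k ∈ S` with `2k + 1 < n`. -/
def swapPerm (n : ℕ) (S : Finset ℕ) : Equiv.Perm (Fin n) := (swapFun_involutive n S).toPerm

section swapPerm

variable {n : ℕ}

lemma swapPerm_apply (S : Finset ℕ) (x : Fin n) :
    swapPerm n S x = if h : (x : ℕ) / 2 ∈ S ∧ partner x < n then ⟨partner x, h.2⟩ else x := rfl

lemma swapPerm_inv (S : Finset ℕ) : (swapPerm n S)⁻¹ = swapPerm n S :=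
  Function.Involutive.toPerm_symm _

lemma val_swapPerm_div_two (S : Finset ℕ) (x : Fin n) : (swapPerm n S x : ℕ) / 2 = x / 2 := by
  rw [swapPerm_apply]; split_ifs <;> simp [partner_div_two]

lemma swapPerm_apply_congr {S T : Finset ℕ} {x : Fin n} (h : (x : ℕ) / 2 ∈ S ↔ (x : ℕ) / 2 ∈ T) :
    swapPerm n S x = swapPerm n T x := by
  simp only [swapPerm_apply, h]

lemma swapPerm_lt_swapPerm_iff {S : Finset ℕ} {u v : Fin n} (h : (u : ℕ) / 2 ≠ v / 2) :
    swapPerm n S u < swapPerm n S v ↔ u < v := by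
  have hu := val_swapPerm_div_two S u
  have hv := val_swapPerm_div_two S v
  rw [Fin.lt_def, Fin.lt_def]
  omega

end swapPerm

def pairIndices (Y : Finset ℕ) : Finset ℕ :=
  (Y.image (· / 2)).filter fun k => 2 * k ∈ Y ∧ 2 * k + 1 ∈ Y

lemma mem_pairIndices {Y : Finset ℕ} {k : ℕ} :
    k ∈ pairIndices Y ↔ 2 * k ∈ Y ∧ 2 * k + 1 ∈ Y := by
  simp only [pairIndices, mem_filter, mem_image, and_iff_right_iff_imp]
  exact fun h => ⟨2 * k, h.1, by omega⟩

lemma pairIndices_mono {Y Z : Finset ℕ} (h : Y ⊆ Z) : pairIndices Y ⊆ pairIndices Z := by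
  intro k hk
  rw [mem_pairIndices] at hk ⊢
  exact ⟨h hk.1, h hk.2⟩

lemma two_mul_card_pairIndices_le (Y : Finset ℕ) : 2 * #(pairIndices Y) ≤ #Y := by
  have hdisj : Disjoint ((pairIndices Y).image (2 * ·)) ((pairIndices Y).image (2 * · + 1)) := by
    simp only [disjoint_left, mem_image]
    omega
  have hsub : (pairIndices Y).image (2 * ·) ∪ (pairIndices Y).image (2 * · + 1) ⊆ Y := by
    simp only [union_subset_iff, image_subset_iff]
    exact ⟨fun k hk => (mem_pairIndices.1 hk).1, fun k hk => (mem_pairIndices.1 hk).2⟩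
  calc 2 * #(pairIndices Y)
      = #((pairIndices Y).image (2 * ·)) + #((pairIndices Y).image (2 * · + 1)) := by
        rw [card_image_of_injective _ (fun a b h => by simpa using h),
          card_image_of_injective _ (fun a b h => by simpa using h)]
        ring
    _ = #((pairIndices Y).image (2 * ·) ∪ (pairIndices Y).image (2 * · + 1)) :=
        (card_union_of_disjoint hdisj).symm
    _ ≤ #Y := card_le_card hsub

lemma div_two_mem_pairIndices {Y : Finset ℕ} {a b : ℕ} (ha : a ∈ Y) (hb : b ∈ Y) (hne : a ≠ b)
    (h : a / 2 = b / 2) : a / 2 ∈ pairIndices Y := by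
  rw [mem_pairIndices]
  obtain ⟨h1, h2⟩ | ⟨h1, h2⟩ :
      (2 * (a / 2) = a ∧ 2 * (a / 2) + 1 = b) ∨ (2 * (a / 2) = b ∧ 2 * (a / 2) + 1 = a) := by
    omega
  · rw [h2, h1]; exact ⟨ha, hb⟩
  · rw [h2, h1]; exact ⟨hb, ha⟩

lemma pairIndices_range (m : ℕ) : pairIndices (range m) = range (m / 2) := by
  ext k; simp only [mem_pairIndices, mem_range]; omega

section restrict

variable {n : ℕ} {X : Finset (Fin n)}

lemma restrictMap_swapPerm_inter (S : Finset ℕ) :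
    restrictMap X (swapPerm n S) =
      restrictMap X (swapPerm n (S ∩ pairIndices (X.map Fin.valEmbedding))) := by
  set P := pairIndices (X.map Fin.valEmbedding)
  funext u v
  simp only [restrictMap, swapPerm_inv, eq_iff_iff]
  refine and_congr_right fun hu => and_congr_right fun hv => ?_
  by_cases hdiv : (u : ℕ) / 2 = v / 2
  · by_cases huv : u = v
    · simp [huv]
    have hmem : (u : ℕ) / 2 ∈ P := div_two_mem_pairIndices (mem_map_of_mem _ hu)
      (mem_map_of_mem _ hv) (Fin.val_ne_of_ne huv) hdiv
    rw [swapPerm_apply_congr (T := S ∩ P) (x := u) (by simp [hmem]),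
      swapPerm_apply_congr (T := S ∩ P) (x := v) (by simp [← hdiv, hmem])]
  · rw [swapPerm_lt_swapPerm_iff hdiv, swapPerm_lt_swapPerm_iff hdiv]

lemma restrictMap_swapPerm_iff {S : Finset ℕ} {k : ℕ} {u v : Fin n} (hu : u ∈ X) (hv : v ∈ X)
    (hku : (u : ℕ) = 2 * k) (hkv : (v : ℕ) = 2 * k + 1) :
    restrictMap X (swapPerm n S) v u ↔ k ∈ S := by
  have hpu : partner u = v := by unfold partner; omega
  have hpv : partner v = u := by unfold partner; omega
  have hu2 : (u : ℕ) / 2 = k := by omega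
  have hv2 : (v : ℕ) / 2 = k := by omega
  simp only [restrictMap, swapPerm_inv, swapPerm_apply, hu, hv, true_and, hpu, hpv, hu2, hv2,
    u.isLt, v.isLt, and_true]
  split_ifs with hk <;> simp [Fin.lt_def, hku, hkv, hk]

lemma injOn_restrictMap_swapPerm :
    Set.InjOn (restrictMap X ∘ swapPerm n)
      (pairIndices (X.map Fin.valEmbedding)).powerset := by
  intro S hS T hT h
  replace h : restrictMap X (swapPerm n S) = restrictMap X (swapPerm n T) := h
  simp only [coe_powerset, Set.mem_preimage, Set.mem_powerset_iff, coe_subset] at hS hT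
  ext k
  by_cases hk : k ∈ pairIndices (X.map Fin.valEmbedding)
  · obtain ⟨⟨u, hu, hku⟩, ⟨v, hv, hkv⟩⟩ := by simpa only [mem_pairIndices, mem_map] using hk
    rw [← restrictMap_swapPerm_iff hu hv hku hkv, h, restrictMap_swapPerm_iff hu hv hku hkv]
  · exact iff_of_false (fun h => hk (hS h)) (fun h => hk (hT h))

open Classical in
lemma card_image_restrictMap_swapPerm {R : Finset ℕ}
    (hR : pairIndices (X.map Fin.valEmbedding) ⊆ R) :
    #((R.powerset.image (swapPerm n)).image (restrictMap X)) =
      2 ^ #(pairIndices (X.map Fin.valEmbedding)) := by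
  set P := pairIndices (X.map Fin.valEmbedding)
  have himage : (R.powerset.image (swapPerm n)).image (restrictMap X) =
      P.powerset.image (restrictMap X ∘ swapPerm n) := by
    ext r
    simp only [image_image, mem_image, mem_powerset, Function.comp]
    constructor
    · rintro ⟨S, -, rfl⟩
      exact ⟨S ∩ P, inter_subset_right, (restrictMap_swapPerm_inter S).symm⟩
    · rintro ⟨S, hS, rfl⟩
      exact ⟨S, hS.trans hR, rfl⟩
  rw [himage, card_image_of_injOn injOn_restrictMap_swapPerm, card_powerset]

end restrict

section family

variable {n : ℕ}

lemma exists_swapPerm_eq_iff (σ : Equiv.Perm (Fin n)) :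
    (∃ S ⊆ pairIndices (range n), swapPerm n S = σ) ↔
      ∀ x : Fin n, σ x = x ∨ (σ x : ℕ) = partner x := by
  constructor
  · rintro ⟨S, -, rfl⟩ x
    rw [swapPerm_apply]
    split_ifs
    exacts [Or.inr rfl, Or.inl rfl]
  intro h
  have hpartner : ∀ x, σ x ≠ x → (σ x : ℕ) = partner x := fun x hx => (h x).resolve_left hx
  refine ⟨(univ.filter fun x => σ x ≠ x).image fun x : Fin n => (x : ℕ) / 2, ?_, ?_⟩
  · simp only [subset_iff, mem_image, mem_filter, mem_univ, true_and, mem_pairIndices, mem_range]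
    rintro _ ⟨x, hx, rfl⟩
    have := hpartner x hx
    have := (σ x).isLt
    have := x.isLt
    unfold partner at *
    omega
  refine Equiv.ext fun x => ?_
  rw [swapPerm_apply]
  split_ifs with hx
  · obtain ⟨y, hy, hdiv⟩ := by simpa only [mem_image, mem_filter, mem_univ, true_and] using hx.1
    by_cases hfix : σ x = x
    · -- `y` is moved and lies in the block of the fixed point `x`, so `σ y = partner y = x = σ x`
      refine absurd (σ.injective ?_) (fun hxy : y = x => hy (hxy ▸ hfix))
      have hy' := hpartner y hy
      have hyx : (y : ℕ) ≠ x := fun h => hy (Fin.ext h ▸ hfix)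
      rw [hfix]
      ext
      unfold partner at *
      omega
    · exact Fin.ext (hpartner x hfix).symm
  · by_contra hne
    have hσx := hpartner x (Ne.symm hne)
    exact hx ⟨mem_image.2 ⟨x, by simpa using Ne.symm hne, rfl⟩, hσx ▸ (σ x).isLt⟩

lemma forall_eq_or_partner_iff (σ : Equiv.Perm (Fin n)) :
    (∀ x : Fin n, σ x = x ∨ (σ x : ℕ) = partner x) ↔
      ∀ x : Fin n, σ x = x ∨ ∃ k, 2 * k + 1 < n ∧
        (((x : ℕ) = 2 * k ∧ (σ x : ℕ) = 2 * k + 1) ∨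
         ((x : ℕ) = 2 * k + 1 ∧ (σ x : ℕ) = 2 * k)) := by
  refine forall_congr' fun x => or_congr_right ?_
  have := (σ x).isLt
  unfold partner
  constructor
  · intro h
    exact ⟨x / 2, by omega, by omega⟩
  · rintro ⟨k, -, h⟩
    omega

end family

open Classical in
/-- The family F₂ of permutations differing from the identity by the transposition of an
arbitrary subset of the pairs (2i, 2i+1) has size 2^⌊n/2⌋ and φ(m) = 2^⌊m/2⌋. -/
theorem stmt15 (n : ℕ) (F : Finset (Equiv.Perm (Fin n)))
    (hF : F = Finset.univ.filter (fun σ => ∀ x : Fin n, σ x = x ∨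
      ∃ k, 2 * k + 1 < n ∧
        (((x : ℕ) = 2 * k ∧ (σ x : ℕ) = 2 * k + 1) ∨
         ((x : ℕ) = 2 * k + 1 ∧ (σ x : ℕ) = 2 * k)))) :
    F.card = 2 ^ (n / 2) ∧
    ∀ m, 2 ≤ m → m ≤ n →
      ((∀ X : Finset (Fin n), X.card = m →
          (F.image (restrictMap X)).card ≤ 2 ^ (m / 2)) ∧
       (∃ X : Finset (Fin n), X.card = m ∧
          (F.image (restrictMap X)).card = 2 ^ (m / 2))) := by
  have hFR : F = (pairIndices (range n)).powerset.image (swapPerm n) := by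
    ext σ
    simp only [hF, mem_filter, mem_univ, true_and, mem_image, mem_powerset,
      exists_swapPerm_eq_iff, forall_eq_or_partner_iff]
  have hcount (X : Finset (Fin n)) :
      #(F.image (restrictMap X)) = 2 ^ #(pairIndices (X.map Fin.valEmbedding)) := by
    refine hFR ▸ card_image_restrictMap_swapPerm (pairIndices_mono ?_)
    rw [← Nat.Iio_eq_range, ← Fin.map_valEmbedding_univ]
    exact map_subset_map.2 (subset_univ X)
  refine ⟨?_, fun m _ hmn => ⟨fun X hX => ?_, ?_⟩⟩
  · have hinj : Set.InjOn (swapPerm n) (pairIndices (range n)).powerset := by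
      have h := injOn_restrictMap_swapPerm (X := (univ : Finset (Fin n)))
      rw [Fin.map_valEmbedding_univ, Nat.Iio_eq_range] at h
      exact h.of_comp
    rw [hFR, card_image_of_injOn hinj, card_powerset, pairIndices_range, card_range]
  · have := two_mul_card_pairIndices_le (X.map Fin.valEmbedding)
    rw [hcount]
    exact Nat.pow_le_pow_right two_pos (by rw [card_map] at this; omega)
  · have hlt (k) (hk : k ∈ range m) : k < n := (mem_range.1 hk).trans_le hmn
    refine ⟨(range m).attachFin hlt, by rw [card_attachFin, card_range], ?_⟩
    rw [hcount, map_valEmbedding_attachFin, pairIndices_range, card_range]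
end

section
/- Let F be the family of all permutations σ of [n] such that σ restricts to the identity order on some (n-1)-element subset of [n]. Then every pair {i,j} ⊆ [n] is a distinguishing pair of some two permutations in F, i.e., |I_F| = C(n,2); moreover φ_F(m) = (m-1)^2 + 1. -/
/-!
Moving `p.1` to just before or just after `p.2` gives two members of `F` whose inversion sets
differ exactly in `p`, so every pair is a distinguishing pair.

For the shatter function, identify `X` with `Fin m` through its increasing enumeration. The
restriction of a member of `F` to `X` is again the identity order with one element moved, and
every such order lifts back to a member of `F`. Besides the identity, these orders are indexed by
a pair `a < b` together with a direction (`b` moves left past `a`, or `a` moves right past `b`),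
the two directions giving the same order exactly when `b = a + 1`; this leaves
`1 + 2 * C(m, 2) - (m - 1) = (m - 1) ^ 2 + 1` orders.
-/

open Finset Function Equiv

theorem Tuple.sort_inv_lt_sort_inv_iff {n : ℕ} {α : Type*} [LinearOrder α] {f : Fin n → α}
    (hf : Injective f) (u v : Fin n) :
    (Tuple.sort f)⁻¹ u < (Tuple.sort f)⁻¹ v ↔ f u < f v := by
  have hmono : StrictMono (f ∘ Tuple.sort f) :=
    (Tuple.monotone_sort f).strictMono_of_injective (hf.comp (Tuple.sort f).injective)
  simpa [Perm.inv_def] using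
    (hmono.lt_iff_lt (a := (Tuple.sort f)⁻¹ u) (b := (Tuple.sort f)⁻¹ v)).symm

section Insertion

variable {n : ℕ}

/-- Sorting by this key moves `x` into the gap just before `t` and keeps the other elements
in increasing order. -/
def insertKey (x t : ℕ) (v : Fin n) : ℕ := if (v : ℕ) = x then 2 * t else 2 * v + 1

def insertOrder (x t : ℕ) (i j : Fin n) : Prop := insertKey x t i < insertKey x t j

noncomputable def insertPerm (x t : ℕ) : Perm (Fin n) := Tuple.sort (insertKey x t)

theorem insertKey_injective (x t : ℕ) : Injective (insertKey (n := n) x t) := by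
  intro u v h
  unfold insertKey at h
  split_ifs at h <;> omega

theorem insertPerm_inv_lt_iff (x t : ℕ) (u v : Fin n) :
    (insertPerm x t)⁻¹ u < (insertPerm x t)⁻¹ v ↔ insertOrder x t u v :=
  Tuple.sort_inv_lt_sort_inv_iff (insertKey_injective x t) u v

theorem strictMonoOn_insertPerm_inv (x : Fin n) (t : ℕ) :
    StrictMonoOn ⇑(insertPerm x t)⁻¹ {x}ᶜ := by
  intro u hu v hv huv
  rw [insertPerm_inv_lt_iff, insertOrder, insertKey, insertKey,
    if_neg (Fin.val_ne_of_ne hu), if_neg (Fin.val_ne_of_ne hv)]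
  exact Nat.add_lt_add_right (Nat.mul_lt_mul_of_pos_left huv two_pos) 1

theorem insertOrder_inversion_iff (x t : ℕ) {c d : Fin n} (hcd : c < d) :
    insertOrder x t d c ↔
      ((d : ℕ) = x ∧ t ≤ c ∧ (c : ℕ) < x) ∨ ((c : ℕ) = x ∧ x < (d : ℕ) ∧ (d : ℕ) < t) := by
  rw [Fin.lt_def] at hcd
  unfold insertOrder insertKey
  split_ifs <;> omega

theorem isInv_insertPerm_iff (x t : ℕ) (q : Fin n × Fin n) :
    isInv (insertPerm x t) q ↔ q.1 < q.2 ∧ insertOrder x t q.2 q.1 := by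
  rw [isInv, insertPerm_inv_lt_iff]

end Insertion

theorem ne_of_isDistPair {n : ℕ} {σ τ : Perm (Fin n)} {p : Fin n × Fin n}
    (h : isDistPair σ τ p) : σ ≠ τ := by
  rintro rfl
  exact h.2.1 Iff.rfl

theorem isDistPair_insertPerm {n : ℕ} {p : Fin n × Fin n} (hp : p.1 < p.2) :
    isDistPair (insertPerm p.1 p.2) (insertPerm p.1 (p.2 + 1)) p := by
  have key : ∀ q : Fin n × Fin n, q.1 < q.2 →
      ((isInv (insertPerm p.1 p.2) q ↔ isInv (insertPerm p.1 (p.2 + 1)) q) ↔ q ≠ p) := by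
    intro q hq
    rw [isInv_insertPerm_iff, isInv_insertPerm_iff, insertOrder_inversion_iff _ _ hq,
      insertOrder_inversion_iff _ _ hq, Ne, Prod.ext_iff, Fin.ext_iff, Fin.ext_iff]
    rw [Fin.lt_def] at hp hq
    omega
  refine ⟨hp, by simp [key p hp], fun q hq hne => ?_⟩
  rw [key q hq, not_not] at hne
  exact Or.inr ⟨hne ▸ rfl, hne ▸ le_rfl⟩

section NormalForms

variable {m : ℕ}

theorem insertOrder_eq_lt {x t : ℕ} (h : t = x ∨ t = x + 1) :
    insertOrder (n := m) x t = (· < ·) := by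
  funext i j
  apply propext
  rw [insertOrder, insertKey, insertKey, Fin.lt_def]
  split_ifs <;> omega

theorem insertOrder_succ_self (x : ℕ) :
    insertOrder (n := m) (x + 1) x = insertOrder x (x + 2) := by
  funext i j
  apply propext
  unfold insertOrder insertKey
  split_ifs <;> omega

/-- The non-identity orders obtained by moving one element, indexed without repetition by
`[0, m - 1) × [0, m - 1)`: for `a < b` the element `b + 1` moves left to just before `a`,
otherwise `b` moves right to just after `a + 1`. -/
def canonicalOrder (q : ℕ × ℕ) : Fin m → Fin m → Prop :=
  if q.1 < q.2 then insertOrder (q.2 + 1) q.1 else insertOrder q.2 (q.1 + 2)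

open Classical in
noncomputable def normalForms (m : ℕ) : Finset (Fin m → Fin m → Prop) :=
  insert (· < ·) ((range (m - 1) ×ˢ range (m - 1)).image canonicalOrder)

theorem insertOrder_mem_normalForms {x t : ℕ} (hx : x < m) (ht : t ≤ m) :
    insertOrder x t ∈ normalForms m := by
  rw [normalForms, mem_insert, mem_image]
  rcases lt_trichotomy (t + 1) x with hlt | heq | hgt
  · refine Or.inr ⟨(t, x - 1), by simp; omega, ?_⟩
    rw [canonicalOrder, if_pos (by omega), Nat.sub_add_cancel (by omega)]
  · refine Or.inr ⟨(t, t), by simp; omega, ?_⟩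
    rw [canonicalOrder, if_neg (lt_irrefl t), ← insertOrder_succ_self, heq]
  · by_cases hid : t = x ∨ t = x + 1
    · exact Or.inl (insertOrder_eq_lt hid)
    · refine Or.inr ⟨(t - 2, x), by simp; omega, ?_⟩
      rw [canonicalOrder, if_neg (by omega), Nat.sub_add_cancel (by omega)]

theorem canonicalOrder_inversion_iff (q : ℕ × ℕ) {c d : Fin m} (hcd : c < d) :
    canonicalOrder q d c ↔
      if q.1 < q.2 then (d : ℕ) = q.2 + 1 ∧ q.1 ≤ c else (c : ℕ) = q.2 ∧ (d : ℕ) ≤ q.1 + 1 := by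
  have := Fin.lt_def.1 hcd
  unfold canonicalOrder
  split_ifs <;> rw [insertOrder_inversion_iff _ _ hcd] <;> omega

theorem canonicalOrder_injOn :
    Set.InjOn (canonicalOrder (m := m)) (range (m - 1) ×ˢ range (m - 1) : Finset _) := by
  rintro ⟨a, b⟩ hab ⟨a', b'⟩ hab' h
  simp only [coe_product, coe_range, Set.mem_prod, Set.mem_Iio] at hab hab'
  have probe : ∀ c d : ℕ, c < d → d < m →
      ((if a < b then d = b + 1 ∧ a ≤ c else c = b ∧ d ≤ a + 1) ↔
        (if a' < b' then d = b' + 1 ∧ a' ≤ c else c = b' ∧ d ≤ a' + 1)) := by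
    intro c d hcd hd
    have hcd' : (⟨c, by omega⟩ : Fin m) < ⟨d, hd⟩ := Fin.mk_lt_mk.2 hcd
    have := congrFun (congrFun h ⟨d, hd⟩) ⟨c, by omega⟩
    rwa [eq_iff_iff, canonicalOrder_inversion_iff _ hcd',
      canonicalOrder_inversion_iff _ hcd'] at this
  -- `(b, b + 1)` is an inversion of every canonical order; `(a, b + 1)` (for `a < b`) or
  -- `(b, a + 1)` (otherwise) then fixes the other index
  have h1 := probe b (b + 1) (by omega) (by omega)
  have h2 := probe b' (b' + 1) (by omega) (by omega)
  have h3 := probe (min a b) (b + 1) (by omega) (by omega)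
  have h4 := probe (min a' b') (b' + 1) (by omega) (by omega)
  have h5 := probe (min a b) (a + 1) (by omega) (by omega)
  have h6 := probe (min a' b') (a' + 1) (by omega) (by omega)
  ext <;> dsimp only <;> split_ifs at h1 h2 h3 h4 h5 h6 <;> omega

theorem card_normalForms : (normalForms m).card = (m - 1) ^ 2 + 1 := by
  have hlt : (· < ·) ∉ (range (m - 1) ×ˢ range (m - 1)).image (canonicalOrder (m := m)) := by
    simp only [mem_image, not_exists, not_and]
    rintro ⟨a, b⟩ hab h
    simp only [mem_product, mem_range] at hab
    have hswap : (⟨b, by omega⟩ : Fin m) < ⟨b + 1, by omega⟩ := Fin.mk_lt_mk.2 b.lt_succ_self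
    have := (canonicalOrder_inversion_iff (a, b) hswap).2 (by dsimp only; split_ifs <;> omega)
    rw [h] at this
    exact absurd this (by simp [Fin.lt_def])
  rw [normalForms, card_insert_of_notMem hlt, card_image_of_injOn canonicalOrder_injOn,
    card_product, card_range, sq]

theorem exists_eq_insertOrder_of_mem_normalForms (hm : 0 < m) {R : Fin m → Fin m → Prop}
    (hR : R ∈ normalForms m) : ∃ (x : Fin m) (t : ℕ), R = insertOrder x t := by
  rw [normalForms, mem_insert, mem_image] at hR
  rcases hR with rfl | ⟨⟨a, b⟩, hab, rfl⟩
  · exact ⟨⟨0, hm⟩, 0, (insertOrder_eq_lt (Or.inl rfl)).symm⟩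
  · simp only [mem_product, mem_range] at hab
    unfold canonicalOrder
    split_ifs
    · exact ⟨⟨b + 1, by omega⟩, a, rfl⟩
    · exact ⟨⟨b, by omega⟩, a + 2, rfl⟩

theorem exists_insertOrder_of_strictMonoOn {α : Type*} [LinearOrder α] {g : Fin m → α}
    (hg : Injective g) {x : Fin m} (hmono : StrictMonoOn g {x}ᶜ) :
    ∃ t ≤ m, ∀ i j, g i < g j ↔ insertOrder x t i j := by
  classical
  -- `x` goes just after the last other element that precedes it
  set t := (univ.filter fun i => i ≠ x ∧ g i < g x).sup fun i => (i : ℕ) + 1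
  have hbefore : ∀ i, i ≠ x → (g i < g x ↔ (i : ℕ) < t) := by
    intro i hi
    constructor
    · intro hlt
      exact Nat.lt_of_succ_le (le_sup (f := fun i : Fin m => (i : ℕ) + 1) (by simp [hi, hlt]))
    · intro hlt
      obtain ⟨j, hj, hij⟩ := Finset.lt_sup_iff.1 hlt
      simp only [mem_filter, mem_univ, true_and] at hj
      rcases (Nat.lt_succ_iff.1 hij).lt_or_eq with h | h
      · exact (hmono hi hj.1 h).trans hj.2
      · exact Fin.ext h ▸ hj.2
  refine ⟨t, Finset.sup_le fun i _ => i.isLt, fun i j => ?_⟩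
  rw [insertOrder, insertKey, insertKey]
  by_cases hi : i = x <;> by_cases hj : j = x
  · subst hi hj
    simp
  · subst hi
    rw [if_pos rfl, if_neg (Fin.val_ne_of_ne hj), ← not_le, (hg.ne hj).le_iff_lt, hbefore j hj]
    omega
  · subst hj
    rw [if_neg (Fin.val_ne_of_ne hi), if_pos rfl, hbefore i hi]
    omega
  · rw [if_neg (Fin.val_ne_of_ne hi), if_neg (Fin.val_ne_of_ne hj), hmono.lt_iff_lt hi hj,
      Fin.lt_def]
    omega

end NormalForms

section Restriction

variable {n m : ℕ}

theorem insertOrder_comp_iff {e : Fin m → Fin n} (he : StrictMono e) (x : Fin m) {s t : ℕ}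
    (hst : ∀ j, s ≤ e j ↔ t ≤ j) (i j : Fin m) :
    insertOrder (e x : ℕ) s (e i) (e j) ↔ insertOrder x t i j := by
  have hx : ∀ k, ((e k : ℕ) = e x ↔ (k : ℕ) = x) := by
    simp [Fin.val_inj, he.injective.eq_iff]
  have hij : (e i : ℕ) < e j ↔ (i : ℕ) < j := he.lt_iff_lt
  have hsi := hst i
  have hsj := hst j
  unfold insertOrder insertKey
  simp only [hx]
  split_ifs <;> omega

theorem exists_le_orderEmbedding_iff (e : Fin m ↪o Fin n) (t : ℕ) :
    ∃ s : ℕ, ∀ j, s ≤ e j ↔ t ≤ j := by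
  by_cases ht : t < m
  · exact ⟨e ⟨t, ht⟩, fun j => (Fin.le_def.symm.trans e.le_iff_le).trans Fin.le_def⟩
  · exact ⟨n, fun j => by have := (e j).isLt; have := j.isLt; omega⟩

theorem exists_strictMonoOn_inv_comp {σ : Perm (Fin n)} {x : Fin n}
    (hσ : StrictMonoOn ⇑σ⁻¹ {x}ᶜ) (e : Fin m ↪o Fin n) (hm : 0 < m) :
    ∃ x₀ : Fin m, StrictMonoOn (⇑σ⁻¹ ∘ e) {x₀}ᶜ := by
  by_cases h : ∃ i, e i = x
  · obtain ⟨x₀, rfl⟩ := h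
    exact ⟨x₀, fun i hi j hj hij =>
      hσ (e.injective.ne hi) (e.injective.ne hj) (e.strictMono hij)⟩
  · push Not at h
    exact ⟨⟨0, hm⟩, fun i _ j _ hij => hσ (h i) (h j) (e.strictMono hij)⟩

variable {X : Finset (Fin n)}

theorem restrictMap_orderEmbOfFin_iff (hX : X.card = m) (σ : Perm (Fin n)) (i j : Fin m) :
    restrictMap X σ (X.orderEmbOfFin hX i) (X.orderEmbOfFin hX j) ↔
      σ⁻¹ (X.orderEmbOfFin hX i) < σ⁻¹ (X.orderEmbOfFin hX j) := by
  simp [restrictMap]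

theorem restrictMap_eq_of_preimage_eq (hX : X.card = m) {σ τ : Perm (Fin n)}
    (h : X.orderEmbOfFin hX ⁻¹'o restrictMap X σ = X.orderEmbOfFin hX ⁻¹'o restrictMap X τ) :
    restrictMap X σ = restrictMap X τ := by
  funext u v
  apply propext
  by_cases huv : u ∈ X ∧ v ∈ X
  · obtain ⟨i, rfl⟩ : u ∈ Set.range (X.orderEmbOfFin hX) := by simp [huv.1]
    obtain ⟨j, rfl⟩ : v ∈ Set.range (X.orderEmbOfFin hX) := by simp [huv.2]
    exact iff_of_eq (congrFun (congrFun h i) j)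
  · simp only [restrictMap]
    tauto

open Classical in
theorem image_preimage_restrictMap (hX : X.card = m) {F : Finset (Perm (Fin n))}
    (hF : ∀ σ, σ ∈ F ↔ ∃ x, StrictMonoOn ⇑σ⁻¹ {x}ᶜ) (hm : 0 < m) :
    F.image ((X.orderEmbOfFin hX ⁻¹'o ·) ∘ restrictMap X) = normalForms m := by
  set e := X.orderEmbOfFin hX
  ext R
  simp only [mem_image, comp_apply]
  constructor
  · rintro ⟨σ, hσ, rfl⟩
    obtain ⟨x, hx⟩ := (hF σ).1 hσ
    obtain ⟨x₀, hx₀⟩ := exists_strictMonoOn_inv_comp hx e hm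
    obtain ⟨t, ht, hσt⟩ :=
      exists_insertOrder_of_strictMonoOn (σ⁻¹.injective.comp e.injective) hx₀
    convert insertOrder_mem_normalForms x₀.isLt ht using 1
    funext i j
    exact propext ((restrictMap_orderEmbOfFin_iff hX σ i j).trans (hσt i j))
  · intro hR
    obtain ⟨x₀, t, rfl⟩ := exists_eq_insertOrder_of_mem_normalForms hm hR
    obtain ⟨s, hs⟩ := exists_le_orderEmbedding_iff e t
    refine ⟨insertPerm (e x₀) s, (hF _).2 ⟨_, strictMonoOn_insertPerm_inv _ _⟩, ?_⟩
    funext i j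
    apply propext
    rw [Order.Preimage, restrictMap_orderEmbOfFin_iff, insertPerm_inv_lt_iff,
      insertOrder_comp_iff e.strictMono x₀ hs]

open Classical in
theorem card_image_restrictMap (hX : X.card = m) {F : Finset (Perm (Fin n))}
    (hF : ∀ σ, σ ∈ F ↔ ∃ x, StrictMonoOn ⇑σ⁻¹ {x}ᶜ) (hm : 0 < m) :
    (F.image (restrictMap X)).card = (m - 1) ^ 2 + 1 := by
  rw [← card_normalForms, ← image_preimage_restrictMap hX hF hm, ← image_image]
  refine (card_image_of_injOn ?_).symm
  intro _ hσ _ hτ h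
  obtain ⟨σ, -, rfl⟩ := mem_image.1 hσ
  obtain ⟨τ, -, rfl⟩ := mem_image.1 hτ
  exact restrictMap_eq_of_preimage_eq hX h

end Restriction

open Classical in
/-- For the family F of all permutations restricting to the identity order on some
(n-1)-subset, every pair is a distinguishing pair, so |I_F| = C(n,2); moreover
φ_F(m) = (m-1)² + 1. -/
theorem stmt16 (n : ℕ) (F : Finset (Equiv.Perm (Fin n)))
    (hF : F = Finset.univ.filter (fun σ => ∃ x : Fin n,
      ∀ u v : Fin n, u ≠ x → v ≠ x → u < v → σ⁻¹ u < σ⁻¹ v)) :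
    (∀ p : Fin n × Fin n, p.1 < p.2 → p ∈ distPairs F) ∧
    (distPairs F).card = n.choose 2 ∧
    ∀ m, 2 ≤ m → m ≤ n →
      ((∀ X : Finset (Fin n), X.card = m →
          (F.image (restrictMap X)).card ≤ (m - 1) ^ 2 + 1) ∧
       (∃ X : Finset (Fin n), X.card = m ∧
          (F.image (restrictMap X)).card = (m - 1) ^ 2 + 1)) := by
  have hmem : ∀ σ, σ ∈ F ↔ ∃ x, StrictMonoOn ⇑σ⁻¹ {x}ᶜ := by
    intro σ
    simp only [hF, mem_filter, mem_univ, true_and]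
    exact exists_congr fun x => ⟨fun h u hu v hv => h u v hu hv, fun h u v hu hv => h hu hv⟩
  have hpairs : ∀ p : Fin n × Fin n, p.1 < p.2 → p ∈ distPairs F := by
    intro p hp
    have hd := isDistPair_insertPerm hp
    rw [distPairs, mem_filter]
    exact ⟨mem_univ p, _, (hmem _).2 ⟨p.1, strictMonoOn_insertPerm_inv _ _⟩,
      _, (hmem _).2 ⟨p.1, strictMonoOn_insertPerm_inv _ _⟩, ne_of_isDistPair hd, hd⟩
  have hdist : distPairs F = univ.filter fun p : Fin n × Fin n => p.1 < p.2 := by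
    ext p
    refine ⟨fun h => mem_filter.2 ⟨mem_univ p, ?_⟩, fun h => hpairs p (mem_filter.1 h).2⟩
    obtain ⟨-, σ, -, τ, -, -, hd⟩ := mem_filter.1 h
    exact hd.1
  refine ⟨hpairs, by rw [hdist, Fintype.card_product_filter_lt, Fintype.card_fin],
    fun m hm hmn => ⟨fun X hX => (card_image_restrictMap hX hmem (by omega)).le, ?_⟩⟩
  obtain ⟨X, -, hX⟩ := exists_subset_card_eq (s := (univ : Finset (Fin n))) (by simpa using hmn)
  exact ⟨X, hX, card_image_restrictMap hX hmem (by omega)⟩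
end

section
/- Bondy's theorem: if R is a family of subsets of [n] with |R| ≤ n, then there exists a subset X ⊆ [n] with |X| = |R| - 1 such that the traces {A ∩ X : A ∈ R} are pairwise distinct. Consequently, if f_R(b) ≤ b for some b, then |R| ≤ b for all n. -/
/-!
Bondy's argument: if `R` has two members, pick a point `x` lying in exactly one of them and split
`R` into the members containing `x` and those avoiding it. Both parts are smaller and nonempty, so
by induction they are separated by sets of sizes `r₁ - 1` and `r₀ - 1`; adding `x` to their union
separates `R` with `1 + (r₁ - 1) + (r₀ - 1) = |R| - 1` points. For the consequence, a
`b`-set separating `b + 1` members of `R` has at least `b + 1` traces.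
-/

open Finset

variable {α : Type*} [DecidableEq α]

lemma injOn_inter_mono {R : Set (Finset α)} {X Y : Finset α} (hXY : X ⊆ Y)
    (hX : Set.InjOn (· ∩ X) R) : Set.InjOn (· ∩ Y) R := by
  intro A hA B hB hAB
  apply hX hA hB
  simp only at hAB ⊢
  rw [← inter_eq_right.mpr hXY, ← inter_assoc, hAB, inter_assoc]

lemma injOn_inter_insert_union {R : Finset (Finset α)} {x : α} {X₁ X₀ : Finset α}
    (h₁ : Set.InjOn (· ∩ X₁) ↑(R.filter (x ∈ ·)))
    (h₀ : Set.InjOn (· ∩ X₀) ↑(R.filter (x ∉ ·))) :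
    Set.InjOn (· ∩ insert x (X₁ ∪ X₀)) ↑R := by
  intro C hC D hD hCD
  simp only at hCD
  have hx : x ∈ C ↔ x ∈ D := by
    have := congrArg (x ∈ ·) hCD
    simp only [mem_inter, mem_insert_self, and_true] at this
    exact Iff.of_eq this
  by_cases hxC : x ∈ C
  · exact injOn_inter_mono (subset_union_left.trans (subset_insert _ _)) h₁
      (by simpa using ⟨hC, hxC⟩) (by simpa using ⟨hD, hx.mp hxC⟩) hCD
  · exact injOn_inter_mono (subset_union_right.trans (subset_insert _ _)) h₀
      (by simpa using ⟨hC, hxC⟩) (by simpa using ⟨hD, mt hx.mpr hxC⟩) hCD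

theorem exists_injOn_inter_card_le (R : Finset (Finset α)) :
    ∃ X : Finset α, #X ≤ #R - 1 ∧ Set.InjOn (· ∩ X) ↑R := by
  induction R using strongInduction with
  | H R ih =>
  by_cases hR : #R ≤ 1
  · exact ⟨∅, by simp, fun A hA B hB _ => card_le_one.mp hR A hA B hB⟩
  obtain ⟨A, hA, B, hB, hAB⟩ := one_lt_card.mp (not_le.mp hR)
  obtain ⟨x, hx⟩ : ∃ x, ¬(x ∈ A ↔ x ∈ B) := not_forall.mp fun h => hAB (ext h)
  obtain ⟨P, hP, Q, hQ, hxP, hxQ⟩ : ∃ P ∈ R, ∃ Q ∈ R, x ∈ P ∧ x ∉ Q := by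
    by_cases hxA : x ∈ A
    · exact ⟨A, hA, B, hB, hxA, fun hxB => hx (iff_of_true hxA hxB)⟩
    · exact ⟨B, hB, A, hA, not_not.mp fun hxB => hx (iff_of_false hxA hxB), hxA⟩
  set R₁ := R.filter (x ∈ ·)
  set R₀ := R.filter (x ∉ ·)
  have hsplit : #R₁ + #R₀ = #R := card_filter_add_card_filter_not _
  have h₁ : 0 < #R₁ := card_pos.mpr ⟨P, mem_filter.mpr ⟨hP, hxP⟩⟩
  have h₀ : 0 < #R₀ := card_pos.mpr ⟨Q, mem_filter.mpr ⟨hQ, hxQ⟩⟩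
  obtain ⟨X₁, hX₁, hinj₁⟩ := ih R₁ (filter_ssubset.mpr ⟨Q, hQ, hxQ⟩)
  obtain ⟨X₀, hX₀, hinj₀⟩ := ih R₀ (filter_ssubset.mpr ⟨P, hP, not_not.mpr hxP⟩)
  refine ⟨insert x (X₁ ∪ X₀), ?_, injOn_inter_insert_union hinj₁ hinj₀⟩
  calc #(insert x (X₁ ∪ X₀)) ≤ #X₁ + #X₀ + 1 :=
        (card_insert_le _ _).trans (Nat.add_le_add_right (card_union_le _ _) 1)
    _ ≤ #R - 1 := by omega

theorem exists_injOn_inter_card_eq [Fintype α] (R : Finset (Finset α))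
    (hR : #R - 1 ≤ Fintype.card α) :
    ∃ X : Finset α, #X = #R - 1 ∧ Set.InjOn (· ∩ X) ↑R := by
  obtain ⟨X, hXcard, hX⟩ := exists_injOn_inter_card_le R
  obtain ⟨Y, hXY, hYcard⟩ := exists_superset_card_eq hXcard (by simpa using hR)
  exact ⟨Y, hYcard, injOn_inter_mono hXY hX⟩

theorem card_le_of_card_image_inter_le [Fintype α] {R : Finset (Finset α)} {b : ℕ}
    (hb : b ≤ Fintype.card α) (h : ∀ X : Finset α, #X = b → #(R.image (· ∩ X)) ≤ b) :
    #R ≤ b := by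
  by_contra! hRb
  obtain ⟨R', hR'R, hR'card⟩ := exists_subset_card_eq (n := b + 1) hRb
  obtain ⟨X, hXcard, hX⟩ := exists_injOn_inter_card_eq R' (by omega)
  rw [hR'card, Nat.add_sub_cancel] at hXcard
  have : b + 1 ≤ #(R.image (· ∩ X)) := calc
    b + 1 = #(R'.image (· ∩ X)) := (card_image_of_injOn hX).trans hR'card |>.symm
    _ ≤ #(R.image (· ∩ X)) := card_le_card (image_subset_image hR'R)
  exact absurd (h X hXcard) (by omega)

/-- Bondy's theorem: if |R| ≤ n then some X with |X| = |R| - 1 separates all members of R;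
consequently, if f_R(b) ≤ b for some b ≤ n, then |R| ≤ b. -/
theorem stmt19 (n : ℕ) (R : Finset (Finset (Fin n))) :
    (R.card ≤ n → ∃ X : Finset (Fin n), X.card = R.card - 1 ∧
      ∀ A ∈ R, ∀ B ∈ R, A ∩ X = B ∩ X → A = B) ∧
    (∀ b ≤ n, (∀ X : Finset (Fin n), X.card = b → (R.image (· ∩ X)).card ≤ b) →
      R.card ≤ b) := by
  refine ⟨fun hRn => ?_, fun b hbn hf => card_le_of_card_image_inter_le (by simpa using hbn) hf⟩
  obtain ⟨X, hXcard, hX⟩ := exists_injOn_inter_card_eq R (by rw [Fintype.card_fin]; omega)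
  exact ⟨X, hXcard, fun A hA B hB => @hX A hA B hB⟩
end
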